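/- arXiv:1805.09494 — 6 statements merged into one kernel-verified Lean document; each statement's English description precedes it below -/
import Mathlib

section
/- If the norm on E is the Euclidean norm induced by the inner product, then ν(L) = sin ∠(L^⊥, K*), where ∠(L^⊥, K*) = min{∠(y,u) : y ∈ L^⊥\{0}, u ∈ K*\{0}} is the minimal angle between the subspace L^⊥ and the cone K*, and ν(L) = min{‖u − y‖₂ : u ∈ K*, y ∈ L^⊥, ‖u‖₂ = 1}. -/
open RealInnerProductSpace

/-- The dual cone `K* = {u : ⟪u,x⟫ ≥ 0 for all x ∈ K}`. -/
def dualCone {E : Type*} [NormedAddCommGroup E] [InnerProductSpace ℝ E] (K : Set E) :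
    Set E := {u | ∀ x ∈ K, 0 ≤ ⟪u, x⟫}

section Aux

open InnerProductGeometry

variable {E : Type*} [NormedAddCommGroup E] [InnerProductSpace ℝ E]

/-- Distance from a unit vector to any point of a line is at least the sine of the angle. -/
lemma aux_sin_angle_le_norm_sub_mul {u y : E} (hu : ‖u‖ = 1) :
    Real.sin (angle y u) * ‖y‖ ≤ ‖u - y‖ * ‖y‖ := by
  have h := sin_angle_mul_norm_mul_norm y u
  rw [hu, mul_one] at h
  rw [h]
  have e1 : ‖u - y‖ ^ 2 = ‖u‖ ^ 2 - 2 * ⟪u, y⟫ + ‖y‖ ^ 2 := norm_sub_sq_real u y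
  have e2 : ⟪y, y⟫ = ‖y‖ ^ 2 := real_inner_self_eq_norm_sq y
  have e3 : ⟪u, u⟫ = ‖u‖ ^ 2 := real_inner_self_eq_norm_sq u
  have e4 : ⟪y, u⟫ = ⟪u, y⟫ := real_inner_comm u y
  rw [hu] at e1
  have h2 : ⟪y, y⟫ * ⟪u, u⟫ - ⟪y, u⟫ * ⟪y, u⟫ ≤ (‖u - y‖ * ‖y‖) ^ 2 := by
    rw [e2, e3, e4, hu]
    nlinarith [sq_nonneg (⟪u, y⟫ - ‖y‖ ^ 2), e1]
  calc √(⟪y, y⟫ * ⟪u, u⟫ - ⟪y, u⟫ * ⟪y, u⟫) ≤ √((‖u - y‖ * ‖y‖) ^ 2) :=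
        Real.sqrt_le_sqrt h2
    _ = ‖u - y‖ * ‖y‖ := Real.sqrt_sq (by positivity)

/-- The distance from a unit vector to its projection onto a line equals the sine of
the angle. -/
lemma aux_norm_sub_proj_eq_sin {v y : E} (hv : ‖v‖ = 1) (hy : y ≠ 0) :
    ‖v - (⟪y, v⟫ / ‖y‖ ^ 2) • y‖ = Real.sin (angle y v) := by
  have hny : (0:ℝ) < ‖y‖ := norm_pos_iff.mpr hy
  have e2 : ⟪y, y⟫ = ‖y‖ ^ 2 := real_inner_self_eq_norm_sq y
  have e3 : ⟪v, v⟫ = ‖v‖ ^ 2 := real_inner_self_eq_norm_sq v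
  have e4 : ⟪y, v⟫ = ⟪v, y⟫ := real_inner_comm v y
  have hcs : ⟪y, v⟫ ^ 2 ≤ ‖y‖ ^ 2 := by
    have := abs_real_inner_le_norm y v
    rw [hv, mul_one] at this
    nlinarith [abs_nonneg ⟪y, v⟫, sq_abs ⟪y, v⟫]
  -- square of left side
  have hL : ‖v - (⟪y, v⟫ / ‖y‖ ^ 2) • y‖ ^ 2 = 1 - ⟪y, v⟫ ^ 2 / ‖y‖ ^ 2 := by
    rw [norm_sub_sq_real, norm_smul, real_inner_smul_right, hv]
    rw [Real.norm_eq_abs, mul_pow, sq_abs, ← e4]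
    field_simp
    ring
  -- square of right side
  have hs := sin_angle_mul_norm_mul_norm y v
  rw [hv, mul_one, e2, e3, hv] at hs
  have hsq : (Real.sin (angle y v) * ‖y‖) ^ 2 = ‖y‖ ^ 2 * 1 ^ 2 - ⟪y, v⟫ * ⟪y, v⟫ := by
    rw [hs]
    exact Real.sq_sqrt (by nlinarith)
  have hR : Real.sin (angle y v) ^ 2 = 1 - ⟪y, v⟫ ^ 2 / ‖y‖ ^ 2 := by
    have h' : Real.sin (angle y v) ^ 2 * ‖y‖ ^ 2 = ‖y‖ ^ 2 - ⟪y, v⟫ ^ 2 := by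
      nlinarith [hsq]
    field_simp
    nlinarith [h']
  have hsin0 : 0 ≤ Real.sin (angle y v) :=
    Real.sin_nonneg_of_nonneg_of_le_pi (angle_nonneg y v) (angle_le_pi y v)
  calc ‖v - (⟪y, v⟫ / ‖y‖ ^ 2) • y‖
      = √(‖v - (⟪y, v⟫ / ‖y‖ ^ 2) • y‖ ^ 2) := (Real.sqrt_sq (norm_nonneg _)).symm
    _ = √(Real.sin (angle y v) ^ 2) := by rw [hL, hR]
    _ = Real.sin (angle y v) := Real.sqrt_sq hsin0

end Aux

/-- In the Euclidean norm, `ν(L) = sin ∠(L^⊥, K*)`, where `∠(L^⊥, K*)` is the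
minimal angle between nonzero elements of `L^⊥` and of `K*`. -/
theorem nu_eq_sin_angle {E : Type*} [NormedAddCommGroup E] [InnerProductSpace ℝ E]
    [FiniteDimensional ℝ E] (K : Set E)
    (hKclosed : IsClosed K) (hKconv : Convex ℝ K)
    (hKcone : ∀ ⦃c : ℝ⦄, 0 ≤ c → ∀ ⦃x⦄, x ∈ K → c • x ∈ K)
    (hKint : (interior K).Nonempty) (hKpointed : ∀ x ∈ K, -x ∈ K → x = 0)
    (L : Submodule ℝ E) (hL : L ≠ ⊤) :
    sInf {r | ∃ u y, u ∈ dualCone K ∧ y ∈ Lᗮ ∧ ‖u‖ = 1 ∧ r = ‖u - y‖} =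
      Real.sin (sInf {θ | ∃ y u, y ∈ Lᗮ ∧ y ≠ 0 ∧ u ∈ dualCone K ∧ u ≠ 0 ∧
        θ = InnerProductGeometry.angle y u}) := by
  classical
  open InnerProductGeometry Real in
  set A := {r | ∃ u y, u ∈ dualCone K ∧ y ∈ Lᗮ ∧ ‖u‖ = 1 ∧ r = ‖u - y‖} with hAdef
  set Θ := {θ | ∃ y u, y ∈ Lᗮ ∧ y ≠ 0 ∧ u ∈ dualCone K ∧ u ≠ 0 ∧
      θ = InnerProductGeometry.angle y u} with hΘdef
  have hAbd : BddBelow A := ⟨0, by rintro r ⟨u, y, -, -, -, rfl⟩; positivity⟩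
  have hΘbd : BddBelow Θ := ⟨0, by rintro θ ⟨y, u, -, -, -, -, rfl⟩; exact angle_nonneg y u⟩
  by_cases hC : ∃ u ∈ dualCone K, u ≠ 0
  swap
  · push_neg at hC
    have hA0 : A = ∅ := by
      ext r
      simp only [hAdef, Set.mem_setOf_eq, Set.mem_empty_iff_false, iff_false]
      rintro ⟨u, y, huC, -, hu1, -⟩
      rw [hC u huC, norm_zero] at hu1
      exact one_ne_zero hu1.symm
    have hΘ0 : Θ = ∅ := by
      ext θ
      simp only [hΘdef, Set.mem_setOf_eq, Set.mem_empty_iff_false, iff_false]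
      rintro ⟨y, u, -, -, huC, hu, -⟩
      exact hu (hC u huC)
    rw [hA0, hΘ0, Real.sInf_empty, Real.sin_zero]
  · obtain ⟨u₀, hu₀C, hu₀⟩ := hC
    have hW : Lᗮ ≠ ⊥ := by
      rw [ne_eq, Submodule.orthogonal_eq_bot_iff]
      exact hL
    obtain ⟨y₀, hy₀W, hy₀⟩ := (Submodule.ne_bot_iff _).mp hW
    have hΘne : Θ.Nonempty := ⟨_, y₀, u₀, hy₀W, hy₀, hu₀C, hu₀, rfl⟩
    have hs0 : 0 ≤ sInf Θ := le_csInf hΘne (by rintro θ ⟨y, u, -, -, -, -, rfl⟩; exact angle_nonneg y u)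
    -- membership of sin (angle y u) in A for suitable witnesses
    have memA : ∀ (y u : E), y ∈ Lᗮ → y ≠ 0 → u ∈ dualCone K → u ≠ 0 →
        Real.sin (angle y u) ∈ A := by
      intro y u hyW hy huC hu
      have hvnorm : ‖(‖u‖⁻¹ : ℝ) • u‖ = 1 := norm_smul_inv_norm hu
      refine ⟨(‖u‖⁻¹ : ℝ) • u, (⟪y, (‖u‖⁻¹ : ℝ) • u⟫ / ‖y‖ ^ 2) • y, ?_, Submodule.smul_mem _ _ hyW,
        hvnorm, ?_⟩
      · intro x hx
        rw [real_inner_smul_left]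
        exact mul_nonneg (by positivity) (huC x hx)
      · rw [aux_norm_sub_proj_eq_sin hvnorm hy,
          angle_smul_right_of_pos y u (inv_pos.mpr (norm_pos_iff.mpr hu))]
    refine le_antisymm ?_ ?_
    · -- sInf A ≤ sin (sInf Θ)
      refine le_of_forall_pos_le_add fun ε hε => ?_
      obtain ⟨θ, hθmem, hθlt⟩ := exists_lt_of_csInf_lt hΘne (lt_add_of_pos_right _ hε)
      have hθge : sInf Θ ≤ θ := csInf_le hΘbd hθmem
      obtain ⟨y, u, hyW, hy, huC, hu, rfl⟩ := hθmem
      have h1 : sInf A ≤ Real.sin (angle y u) := csInf_le hAbd (memA y u hyW hy huC hu)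
      have hpi : angle y u ≤ π := angle_le_pi y u
      have hsub := Real.sin_sub_sin (angle y u) (sInf Θ)
      have h2 : Real.sin ((angle y u - sInf Θ) / 2) ≤ (angle y u - sInf Θ) / 2 :=
        Real.sin_le (by linarith)
      have h3 : 0 ≤ Real.sin ((angle y u - sInf Θ) / 2) :=
        Real.sin_nonneg_of_nonneg_of_le_pi (by linarith) (by linarith [Real.pi_pos])
      have h4 : Real.cos ((angle y u + sInf Θ) / 2) ≤ 1 := Real.cos_le_one _
      nlinarith [h1, hsub, h2, h3, h4, hθlt]
    · -- sin (sInf Θ) ≤ sInf A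
      have hAne : A.Nonempty :=
        ⟨_, memA y₀ u₀ hy₀W hy₀ hu₀C hu₀⟩
      refine le_csInf hAne ?_
      rintro r ⟨u, y, huC, hyW, hu1, rfl⟩
      have hu : u ≠ 0 := by
        intro h; rw [h, norm_zero] at hu1; exact one_ne_zero hu1.symm
      by_cases hy : y = 0
      · subst hy
        rw [sub_zero, hu1]
        exact Real.sin_le_one _
      · -- find θ₁ ∈ Θ with θ₁ ≤ π/2 and sin θ₁ = sin (angle y u)
        have key : ∃ θ₁ ∈ Θ, θ₁ ≤ π / 2 ∧ Real.sin θ₁ = Real.sin (angle y u) := by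
          by_cases h : angle y u ≤ π / 2
          · exact ⟨angle y u, ⟨y, u, hyW, hy, huC, hu, rfl⟩, h, rfl⟩
          · refine ⟨angle (-y) u, ⟨-y, u, Submodule.neg_mem _ hyW, neg_ne_zero.mpr hy, huC, hu,
              rfl⟩, ?_, ?_⟩
            · rw [angle_neg_left]; linarith [angle_le_pi y u]
            · rw [angle_neg_left, Real.sin_pi_sub]
        obtain ⟨θ₁, hθ₁mem, hθ₁le, hθ₁sin⟩ := key
        have hsθ₁ : sInf Θ ≤ θ₁ := csInf_le hΘbd hθ₁mem
        have hmono : Real.sin (sInf Θ) ≤ Real.sin θ₁ := by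
          have := Real.strictMonoOn_sin.monotoneOn
            (by constructor <;> linarith [Real.pi_pos] : sInf Θ ∈ Set.Icc (-(π/2)) (π/2))
            (by constructor <;> linarith [Real.pi_pos] : θ₁ ∈ Set.Icc (-(π/2)) (π/2)) hsθ₁
          exact this
        have hny : (0:ℝ) < ‖y‖ := norm_pos_iff.mpr hy
        have hle : Real.sin (angle y u) ≤ ‖u - y‖ :=
          le_of_mul_le_mul_right (aux_sin_angle_le_norm_sub_mul hu1) hny
        rw [hθ₁sin] at hmono
        linarith
end

section
/- Let A : F → E be a linear map between finite-dimensional normed spaces such that Ax ∈ K\{0} is strictly feasible (i.e., there exists w with Aw ∈ int K), and let L = Image(A). Then dist(A, I) ≤ ν(L) · ‖A‖, where dist(A, I) is the infimum of ‖A − Ã‖ over linear maps Ã such that Ã*w = 0 for some w ∈ K*\{0}, ‖A‖ is the operator norm, and ν(L) = min{‖u−y‖* : u ∈ K*, y ∈ L^⊥, ‖u‖* = 1}. -/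
open RealInnerProductSpace Pointwise

/-- A (possibly non-Euclidean) norm, given as a function. -/
def IsNorm {E : Type*} [NormedAddCommGroup E] [InnerProductSpace ℝ E] (N : E → ℝ) : Prop :=
  (∀ x, 0 ≤ N x) ∧ (∀ x, N x = 0 ↔ x = 0) ∧
    (∀ (c : ℝ) (x : E), N (c • x) = |c| * N x) ∧ (∀ x y, N (x + y) ≤ N x + N y)

/-- The dual norm `‖u‖* = max_{N x = 1} ⟪u,x⟫`. -/
noncomputable def dualNorm {E : Type*} [NormedAddCommGroup E] [InnerProductSpace ℝ E]
    (N : E → ℝ) (u : E) : ℝ :=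
  sSup {r | ∃ x, N x = 1 ∧ r = ⟪u, x⟫}

/-- `ν(L) = min {‖u − y‖* : u ∈ K*, y ∈ L^⊥, ‖u‖* = 1}`. -/
noncomputable def nuMeasure {E : Type*} [NormedAddCommGroup E] [InnerProductSpace ℝ E]
    (N : E → ℝ) (K : Set E) (L : Submodule ℝ E) : ℝ :=
  sInf {r | ∃ u y, u ∈ dualCone K ∧ y ∈ Lᗮ ∧ dualNorm N u = 1 ∧ r = dualNorm N (u - y)}

/-- The operator norm `‖A‖ = max_{|w| ≤ 1} ‖A w‖` of `A : F → E`, with respect to the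
norm `NF` on `F` and the norm `NE` on `E`. -/
noncomputable def opNorm {F E : Type*} [NormedAddCommGroup F] [InnerProductSpace ℝ F]
    [NormedAddCommGroup E] [InnerProductSpace ℝ E]
    (NF : F → ℝ) (NE : E → ℝ) (A : F →ₗ[ℝ] E) : ℝ :=
  sSup {r | ∃ w, NF w ≤ 1 ∧ r = NE (A w)}

/-- Renegar's distance to infeasibility of `A x ∈ K \ {0}`: the infimum of `‖A − Ã‖`
over `Ã` whose adjoint kills some nonzero element of `K*`. -/
noncomputable def distToInfeas {F E : Type*} [NormedAddCommGroup F] [InnerProductSpace ℝ F]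
    [FiniteDimensional ℝ F] [NormedAddCommGroup E] [InnerProductSpace ℝ E]
    [FiniteDimensional ℝ E] (NF : F → ℝ) (NE : E → ℝ) (K : Set E) (A : F →ₗ[ℝ] E) : ℝ :=
  sInf {r | ∃ B : F →ₗ[ℝ] E,
    (∃ w, w ∈ dualCone K ∧ w ≠ 0 ∧ LinearMap.adjoint B w = 0) ∧
    r = opNorm NF NE (A - B)}

section Aux

variable {E : Type*} [NormedAddCommGroup E] [InnerProductSpace ℝ E]

lemma IsNorm.zero' {N : E → ℝ} (hN : IsNorm N) : N 0 = 0 := (hN.2.1 0).mpr rfl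

lemma IsNorm.neg' {N : E → ℝ} (hN : IsNorm N) (x : E) : N (-x) = N x := by
  have h := hN.2.2.1 (-1) x
  simpa using h

lemma IsNorm.sum_le' {N : E → ℝ} (hN : IsNorm N) {ι : Type*} (s : Finset ι) (f : ι → E) :
    N (∑ i ∈ s, f i) ≤ ∑ i ∈ s, N (f i) := by
  classical
  refine Finset.cons_induction_on s ?_ ?_
  · simp [hN.zero']
  · intro a t ha ih
    rw [Finset.sum_cons, Finset.sum_cons]
    exact le_trans (hN.2.2.2 _ _) (by linarith)

lemma IsNorm.exists_upper [FiniteDimensional ℝ E] {N : E → ℝ} (hN : IsNorm N) :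
    ∃ C : ℝ, 0 ≤ C ∧ ∀ x, N x ≤ C * ‖x‖ := by
  let b := stdOrthonormalBasis ℝ E
  refine ⟨∑ i, N (b i), Finset.sum_nonneg fun i _ => hN.1 _, fun x => ?_⟩
  conv_lhs => rw [← b.sum_repr x]
  refine le_trans (hN.sum_le' _ _) ?_
  rw [Finset.sum_mul]
  refine Finset.sum_le_sum fun i _ => ?_
  rw [hN.2.2.1]
  have h1 : |b.repr x i| ≤ ‖x‖ := by
    rw [b.repr_apply_apply]
    have := abs_real_inner_le_norm (b i) x
    rwa [b.orthonormal.1 i, one_mul] at this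
  calc |b.repr x i| * N (b i) ≤ ‖x‖ * N (b i) :=
        mul_le_mul_of_nonneg_right h1 (hN.1 _)
    _ = N (b i) * ‖x‖ := mul_comm _ _

lemma IsNorm.continuous' [FiniteDimensional ℝ E] {N : E → ℝ} (hN : IsNorm N) : Continuous N := by
  obtain ⟨C, hC0, hC⟩ := hN.exists_upper
  have key : ∀ x y : E, N x - N y ≤ C * ‖x - y‖ := by
    intro x y
    have h := hN.2.2.2 (x - y) y
    rw [sub_add_cancel] at h
    linarith [hC (x - y)]
  have hlip : LipschitzWith (Real.toNNReal C) N := by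
    refine LipschitzWith.of_dist_le_mul fun x y => ?_
    rw [Real.dist_eq, dist_eq_norm, Real.coe_toNNReal C hC0, abs_sub_le_iff]
    refine ⟨key x y, ?_⟩
    rw [← norm_neg, neg_sub]
    exact key y x
  exact hlip.continuous

lemma IsNorm.pos_of_ne_zero {N : E → ℝ} (hN : IsNorm N) {x : E} (hx : x ≠ 0) : 0 < N x :=
  lt_of_le_of_ne (hN.1 x) fun h => hx ((hN.2.1 x).mp h.symm)

lemma IsNorm.exists_lower [FiniteDimensional ℝ E] {N : E → ℝ} (hN : IsNorm N) :
    ∃ m : ℝ, 0 < m ∧ ∀ x, m * ‖x‖ ≤ N x := by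
  by_cases hE : ∀ x : E, x = 0
  · exact ⟨1, one_pos, fun x => by rw [hE x]; simp [hN.zero']⟩
  push_neg at hE
  obtain ⟨x₀, hx₀⟩ := hE
  have hsph : (Metric.sphere (0 : E) 1).Nonempty := by
    refine ⟨‖x₀‖⁻¹ • x₀, ?_⟩
    have h0 : ‖x₀‖ ≠ 0 := norm_ne_zero_iff.mpr hx₀
    simp [norm_smul, abs_of_nonneg (inv_nonneg.mpr (norm_nonneg x₀)), inv_mul_cancel₀ h0]
  obtain ⟨z, hz, hmin⟩ := (isCompact_sphere (0 : E) 1).exists_isMinOn hsph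
    hN.continuous'.continuousOn
  have hz1 : ‖z‖ = 1 := by simpa using hz
  have hz0 : z ≠ 0 := by
    intro h; rw [h, norm_zero] at hz1; norm_num at hz1
  refine ⟨N z, hN.pos_of_ne_zero hz0, fun x => ?_⟩
  rcases eq_or_ne x 0 with rfl | hx
  · simp [hN.zero']
  · have hxn : (0 : ℝ) < ‖x‖ := norm_pos_iff.mpr hx
    have hmem : ‖x‖⁻¹ • x ∈ Metric.sphere (0 : E) 1 := by
      simp [norm_smul, abs_of_pos (inv_pos.mpr hxn), inv_mul_cancel₀ hxn.ne']
    have h1 : N z ≤ N (‖x‖⁻¹ • x) := isMinOn_iff.mp hmin _ hmem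
    rw [hN.2.2.1, abs_of_pos (inv_pos.mpr hxn)] at h1
    have h2 := mul_le_mul_of_nonneg_right h1 hxn.le
    calc N z * ‖x‖ ≤ ‖x‖⁻¹ * N x * ‖x‖ := h2
      _ = N x := by field_simp

lemma bddAbove_dualSet [FiniteDimensional ℝ E] {N : E → ℝ} (hN : IsNorm N) (u : E) :
    BddAbove {r | ∃ x, N x = 1 ∧ r = ⟪u, x⟫} := by
  obtain ⟨m, hm, hml⟩ := hN.exists_lower
  refine ⟨‖u‖ * m⁻¹, ?_⟩
  rintro r ⟨x, hx1, rfl⟩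
  have hxle : ‖x‖ ≤ m⁻¹ := by
    have h := hml x
    rw [hx1] at h
    calc ‖x‖ = m⁻¹ * (m * ‖x‖) := by field_simp
      _ ≤ m⁻¹ * 1 := mul_le_mul_of_nonneg_left h (inv_pos.mpr hm).le
      _ = m⁻¹ := mul_one _
  calc ⟪u, x⟫ ≤ ‖u‖ * ‖x‖ := real_inner_le_norm u x
    _ ≤ ‖u‖ * m⁻¹ := mul_le_mul_of_nonneg_left hxle (norm_nonneg u)

lemma dualNorm_nonneg' [FiniteDimensional ℝ E] {N : E → ℝ} (hN : IsNorm N) (u : E) :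
    0 ≤ dualNorm N u := by
  rcases Set.eq_empty_or_nonempty {r | ∃ x, N x = 1 ∧ r = ⟪u, x⟫} with h | h
  · unfold dualNorm
    rw [h, Real.sSup_empty]
  · obtain ⟨r, x, hx, rfl⟩ := h
    have h1 : ⟪u, x⟫ ≤ dualNorm N u := le_csSup (bddAbove_dualSet hN u) ⟨x, hx, rfl⟩
    have h2 : ⟪u, -x⟫ ≤ dualNorm N u :=
      le_csSup (bddAbove_dualSet hN u) ⟨-x, by rw [hN.neg']; exact hx, rfl⟩
    rw [inner_neg_right] at h2
    linarith

lemma inner_le_dualNorm [FiniteDimensional ℝ E] {N : E → ℝ} (hN : IsNorm N) (u x : E) :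
    ⟪u, x⟫ ≤ dualNorm N u * N x := by
  rcases eq_or_ne x 0 with rfl | hx
  · simp [hN.zero']
  · have hNx : 0 < N x := hN.pos_of_ne_zero hx
    have hmem : N ((N x)⁻¹ • x) = 1 := by
      rw [hN.2.2.1, abs_of_pos (inv_pos.mpr hNx), inv_mul_cancel₀ hNx.ne']
    have h1 : ⟪u, (N x)⁻¹ • x⟫ ≤ dualNorm N u :=
      le_csSup (bddAbove_dualSet hN u) ⟨_, hmem, rfl⟩
    rw [real_inner_smul_right] at h1
    calc ⟪u, x⟫ = N x * ((N x)⁻¹ * ⟪u, x⟫) := by field_simp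
      _ ≤ N x * dualNorm N u := mul_le_mul_of_nonneg_left h1 hNx.le
      _ = dualNorm N u * N x := mul_comm _ _

lemma abs_inner_le_dualNorm [FiniteDimensional ℝ E] {N : E → ℝ} (hN : IsNorm N) (u x : E) :
    |⟪u, x⟫| ≤ dualNorm N u * N x := by
  refine abs_le.mpr ⟨?_, inner_le_dualNorm hN u x⟩
  have h := inner_le_dualNorm hN u (-x)
  rw [inner_neg_right, hN.neg'] at h
  linarith

lemma dualNorm_pos [FiniteDimensional ℝ E] {N : E → ℝ} (hN : IsNorm N) {u : E} (hu : u ≠ 0) :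
    0 < dualNorm N u := by
  have hNu : 0 < N u := hN.pos_of_ne_zero hu
  have hmem : N ((N u)⁻¹ • u) = 1 := by
    rw [hN.2.2.1, abs_of_pos (inv_pos.mpr hNu), inv_mul_cancel₀ hNu.ne']
  have h1 : ⟪u, (N u)⁻¹ • u⟫ ≤ dualNorm N u :=
    le_csSup (bddAbove_dualSet hN u) ⟨_, hmem, rfl⟩
  rw [real_inner_smul_right] at h1
  have h2 : 0 < ⟪u, u⟫ := by
    rw [real_inner_self_eq_norm_sq]
    have : 0 < ‖u‖ := norm_pos_iff.mpr hu
    positivity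
  have h3 : 0 < (N u)⁻¹ * ⟪u, u⟫ := mul_pos (inv_pos.mpr hNu) h2
  linarith

lemma dualNorm_smul' [FiniteDimensional ℝ E] {N : E → ℝ} (hN : IsNorm N) {c : ℝ} (hc : 0 ≤ c)
    (u : E) : dualNorm N (c • u) = c * dualNorm N u := by
  have hset : {r | ∃ x, N x = 1 ∧ r = ⟪c • u, x⟫} = c • {r | ∃ x, N x = 1 ∧ r = ⟪u, x⟫} := by
    ext r
    simp only [Set.mem_smul_set, Set.mem_setOf_eq, smul_eq_mul]
    constructor
    · rintro ⟨x, hx, rfl⟩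
      exact ⟨⟪u, x⟫, ⟨x, hx, rfl⟩, (real_inner_smul_left u x c).symm⟩
    · rintro ⟨r, ⟨x, hx, rfl⟩, rfl⟩
      exact ⟨x, hx, (real_inner_smul_left u x c).symm⟩
  unfold dualNorm
  rw [hset, Real.sSup_smul_of_nonneg hc, smul_eq_mul]

lemma exists_dualNorm_eq [FiniteDimensional ℝ E] {N : E → ℝ} (hN : IsNorm N) {u : E}
    (h : dualNorm N u ≠ 0) : ∃ z, N z = 1 ∧ ⟪u, z⟫ = dualNorm N u := by
  obtain ⟨m, hm, hml⟩ := hN.exists_lower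
  set S := {x : E | N x = 1} with hS
  have hScl : IsClosed S := isClosed_eq hN.continuous' continuous_const
  have hSsub : S ⊆ Metric.closedBall 0 m⁻¹ := by
    intro x hx
    rw [Metric.mem_closedBall, dist_zero_right]
    have h1 := hml x
    rw [hx] at h1
    calc ‖x‖ = m⁻¹ * (m * ‖x‖) := by field_simp
      _ ≤ m⁻¹ * 1 := mul_le_mul_of_nonneg_left h1 (inv_pos.mpr hm).le
      _ = m⁻¹ := mul_one _
  have hScpt : IsCompact S :=
    (isCompact_closedBall (0 : E) m⁻¹).of_isClosed_subset hScl hSsub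
  have himg : {r | ∃ x, N x = 1 ∧ r = ⟪u, x⟫} = (fun x => ⟪u, x⟫) '' S := by
    ext r
    constructor
    · rintro ⟨x, hx, rfl⟩; exact ⟨x, hx, rfl⟩
    · rintro ⟨x, hx, rfl⟩; exact ⟨x, hx, rfl⟩
  have hSne : S.Nonempty := by
    by_contra hemp
    rw [Set.not_nonempty_iff_eq_empty] at hemp
    apply h
    unfold dualNorm
    rw [himg, hemp, Set.image_empty, Real.sSup_empty]
  have hcpt2 : IsCompact ((fun x => ⟪u, x⟫) '' S) :=
    hScpt.image (continuous_const.inner continuous_id)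
  have hmem := hcpt2.sSup_mem (hSne.image _)
  rw [← himg] at hmem
  obtain ⟨z, hz1, hz2⟩ := hmem
  exact ⟨z, hz1, hz2.symm⟩

end Aux

section OpAux

variable {F E : Type*} [NormedAddCommGroup F] [InnerProductSpace ℝ F] [FiniteDimensional ℝ F]
  [NormedAddCommGroup E] [InnerProductSpace ℝ E] [FiniteDimensional ℝ E]

lemma opNorm_nonneg' {NF : F → ℝ} {NE : E → ℝ} (hNE : IsNorm NE) (A : F →ₗ[ℝ] E) :
    0 ≤ opNorm NF NE A := by
  apply Real.sSup_nonneg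
  rintro r ⟨w, -, rfl⟩
  exact hNE.1 _

lemma bddAbove_opSet {NF : F → ℝ} {NE : E → ℝ} (hNF : IsNorm NF) (hNE : IsNorm NE)
    (A : F →ₗ[ℝ] E) : BddAbove {r | ∃ w, NF w ≤ 1 ∧ r = NE (A w)} := by
  obtain ⟨m, hm, hml⟩ := hNF.exists_lower
  obtain ⟨C, hC0, hCu⟩ := hNE.exists_upper
  set A' := LinearMap.toContinuousLinearMap A with hA'
  refine ⟨C * ‖A'‖ * m⁻¹, ?_⟩
  rintro r ⟨w, hw, rfl⟩
  have hwn : ‖w‖ ≤ m⁻¹ := by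
    have h1 := (hml w).trans hw
    calc ‖w‖ = m⁻¹ * (m * ‖w‖) := by field_simp
      _ ≤ m⁻¹ * 1 := mul_le_mul_of_nonneg_left h1 (inv_pos.mpr hm).le
      _ = m⁻¹ := mul_one _
  have hAw : A w = A' w := rfl
  calc NE (A w) ≤ C * ‖A w‖ := hCu _
    _ = C * ‖A' w‖ := by rw [hAw]
    _ ≤ C * (‖A'‖ * ‖w‖) := mul_le_mul_of_nonneg_left (A'.le_opNorm w) hC0
    _ ≤ C * (‖A'‖ * m⁻¹) :=
        mul_le_mul_of_nonneg_left
          (mul_le_mul_of_nonneg_left hwn (norm_nonneg A')) hC0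
    _ = C * ‖A'‖ * m⁻¹ := (mul_assoc _ _ _).symm

lemma NE_apply_le {NF : F → ℝ} {NE : E → ℝ} (hNF : IsNorm NF) (hNE : IsNorm NE)
    (A : F →ₗ[ℝ] E) (w : F) : NE (A w) ≤ opNorm NF NE A * NF w := by
  rcases eq_or_ne w 0 with rfl | hw
  · simp [hNF.zero', hNE.zero']
  · have hNw : 0 < NF w := hNF.pos_of_ne_zero hw
    have hmem : NF ((NF w)⁻¹ • w) ≤ 1 := by
      rw [hNF.2.2.1, abs_of_pos (inv_pos.mpr hNw), inv_mul_cancel₀ hNw.ne']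
    have h1 : NE (A ((NF w)⁻¹ • w)) ≤ opNorm NF NE A :=
      le_csSup (bddAbove_opSet hNF hNE A) ⟨_, hmem, rfl⟩
    rw [map_smul, hNE.2.2.1, abs_of_pos (inv_pos.mpr hNw)] at h1
    calc NE (A w) = NF w * ((NF w)⁻¹ * NE (A w)) := by field_simp
      _ ≤ NF w * opNorm NF NE A := mul_le_mul_of_nonneg_left h1 hNw.le
      _ = opNorm NF NE A * NF w := mul_comm _ _

lemma dist_le_of_mem_nuSet {NF : F → ℝ} {NE : E → ℝ} (hNF : IsNorm NF) (hNE : IsNorm NE)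
    (K : Set E) (A : F →ₗ[ℝ] E) {r : ℝ}
    (hr : r ∈ {r | ∃ u y, u ∈ dualCone K ∧ y ∈ (LinearMap.range A)ᗮ ∧
      dualNorm NE u = 1 ∧ r = dualNorm NE (u - y)}) :
    distToInfeas NF NE K A ≤ r * opNorm NF NE A := by
  obtain ⟨u, y, huK, hy, hu1, rfl⟩ := hr
  obtain ⟨z, hz1, hz2⟩ := exists_dualNorm_eq hNE (u := u) (by rw [hu1]; norm_num)
  rw [hu1] at hz2
  have hune : u ≠ 0 := by
    intro h
    rw [h, inner_zero_left] at hz2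
    norm_num at hz2
  set C : F →ₗ[ℝ] E :=
    LinearMap.smulRight (((innerSL ℝ u).toLinearMap).comp A) z with hC
  have hCapp : ∀ w, C w = ⟪u, A w⟫ • z := fun w => rfl
  set B := A - C with hB
  have hABC : A - B = C := sub_sub_cancel A C
  have hBadj : LinearMap.adjoint B u = 0 := by
    have hall : ∀ w, ⟪u, B w⟫ = 0 := by
      intro w
      rw [hB, LinearMap.sub_apply, inner_sub_right, hCapp, real_inner_smul_right, hz2,
        mul_one, sub_self]
    have h := hall (LinearMap.adjoint B u)
    rw [← LinearMap.adjoint_inner_left] at h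
    exact inner_self_eq_zero.mp h
  have hbound : opNorm NF NE (A - B) ≤ dualNorm NE (u - y) * opNorm NF NE A := by
    apply Real.sSup_le
    · rintro s ⟨w, hw, rfl⟩
      rw [hABC, hCapp, hNE.2.2.1, hz1, mul_one]
      have hyAw : ⟪y, A w⟫ = 0 := by
        rw [real_inner_comm]
        exact hy (A w) (LinearMap.mem_range_self A w)
      have h0 : ⟪u, A w⟫ = ⟪u - y, A w⟫ := by
        rw [inner_sub_left, hyAw, sub_zero]
      rw [h0]
      calc |⟪u - y, A w⟫| ≤ dualNorm NE (u - y) * NE (A w) := abs_inner_le_dualNorm hNE _ _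
        _ ≤ dualNorm NE (u - y) * (opNorm NF NE A * NF w) :=
            mul_le_mul_of_nonneg_left (NE_apply_le hNF hNE A w) (dualNorm_nonneg' hNE _)
        _ ≤ dualNorm NE (u - y) * (opNorm NF NE A * 1) :=
            mul_le_mul_of_nonneg_left
              (mul_le_mul_of_nonneg_left hw (opNorm_nonneg' hNE A)) (dualNorm_nonneg' hNE _)
        _ = dualNorm NE (u - y) * opNorm NF NE A := by ring
    · exact mul_nonneg (dualNorm_nonneg' hNE _) (opNorm_nonneg' hNE A)
  have hmem : opNorm NF NE (A - B) ∈ {t | ∃ B' : F →ₗ[ℝ] E,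
      (∃ w, w ∈ dualCone K ∧ w ≠ 0 ∧ LinearMap.adjoint B' w = 0) ∧
      t = opNorm NF NE (A - B')} := ⟨B, ⟨u, huK, hune, hBadj⟩, rfl⟩
  have hbdd : BddBelow {t | ∃ B' : F →ₗ[ℝ] E,
      (∃ w, w ∈ dualCone K ∧ w ≠ 0 ∧ LinearMap.adjoint B' w = 0) ∧
      t = opNorm NF NE (A - B')} := by
    refine ⟨0, ?_⟩
    rintro t ⟨B', -, rfl⟩
    exact opNorm_nonneg' hNE _
  exact (csInf_le hbdd hmem).trans hbound

end OpAux

/-- `dist(A, I) ≤ ν(L) ⬝ ‖A‖` for `L = Image(A)`. -/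
theorem dist_le_nu_mul_opNorm {F E : Type*}
    [NormedAddCommGroup F] [InnerProductSpace ℝ F] [FiniteDimensional ℝ F]
    [NormedAddCommGroup E] [InnerProductSpace ℝ E] [FiniteDimensional ℝ E]
    (NF : F → ℝ) (hNF : IsNorm NF) (NE : E → ℝ) (hNE : IsNorm NE)
    (K : Set E) (hKclosed : IsClosed K) (hKconv : Convex ℝ K)
    (hKcone : ∀ ⦃c : ℝ⦄, 0 ≤ c → ∀ ⦃x⦄, x ∈ K → c • x ∈ K)
    (hKint : (interior K).Nonempty) (hKpointed : ∀ x ∈ K, -x ∈ K → x = 0)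
    (A : F →ₗ[ℝ] E) (hfeas : ∃ w, A w ∈ interior K) :
    distToInfeas NF NE K A ≤ nuMeasure NE K (LinearMap.range A) * opNorm NF NE A := by
  set νS := {r | ∃ u y, u ∈ dualCone K ∧ y ∈ (LinearMap.range A)ᗮ ∧
    dualNorm NE u = 1 ∧ r = dualNorm NE (u - y)} with hνS
  have hnu : nuMeasure NE K (LinearMap.range A) = sInf νS := rfl
  have key : ∀ r ∈ νS, distToInfeas NF NE K A ≤ r * opNorm NF NE A := fun r hr =>
    dist_le_of_mem_nuSet hNF hNE K A hr
  by_cases hne : νS.Nonempty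
  · rcases (opNorm_nonneg' (NF := NF) hNE A).lt_or_eq with hc | hc
    · -- 0 < opNorm
      have h1 : ∀ r ∈ νS, distToInfeas NF NE K A / opNorm NF NE A ≤ r := by
        intro r hr
        rw [div_le_iff₀ hc]
        exact key r hr
      have h2 := le_csInf hne h1
      rw [hnu]
      calc distToInfeas NF NE K A
          = distToInfeas NF NE K A / opNorm NF NE A * opNorm NF NE A := by
            field_simp
        _ ≤ sInf νS * opNorm NF NE A := mul_le_mul_of_nonneg_right h2 hc.le
    · -- opNorm = 0
      obtain ⟨r, hr⟩ := hne
      have h := key r hr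
      rw [← hc, mul_zero] at h
      rw [← hc, mul_zero]
      exact h
  · -- νS empty
    have hνe : νS = ∅ := Set.not_nonempty_iff_eq_empty.mp hne
    have hdist0 : distToInfeas NF NE K A = 0 := by
      have hde : {r | ∃ B : F →ₗ[ℝ] E,
          (∃ w, w ∈ dualCone K ∧ w ≠ 0 ∧ LinearMap.adjoint B w = 0) ∧
          r = opNorm NF NE (A - B)} = ∅ := by
        rw [Set.eq_empty_iff_forall_notMem]
        rintro r ⟨B, ⟨w, hwK, hw0, -⟩, -⟩
        apply hne
        have hd0 : 0 < dualNorm NE w := dualNorm_pos hNE hw0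
        refine ⟨_, (dualNorm NE w)⁻¹ • w, 0, ?_, Submodule.zero_mem _, ?_, rfl⟩
        · intro x hx
          rw [real_inner_smul_left]
          exact mul_nonneg (inv_pos.mpr hd0).le (hwK x hx)
        · rw [dualNorm_smul' hNE (inv_pos.mpr hd0).le, inv_mul_cancel₀ hd0.ne']
      unfold distToInfeas
      rw [hde, Real.sInf_empty]
    rw [hdist0, hnu, hνe, Real.sInf_empty, zero_mul]
end

section
/- Let K ⊆ E be a regular closed convex cone, e ∈ int(K), and ‖·‖_e the induced norm. Then for every u ∈ K*, the dual norm satisfies ‖u‖_e* = ⟨u, e⟩. -/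
open RealInnerProductSpace

/-- The norm `‖x‖ₑ = min {α ≥ 0 : x + αe ∈ K, −x + αe ∈ K}` induced by `(K, e)`. -/
noncomputable def inducedNorm {E : Type*} [NormedAddCommGroup E] [InnerProductSpace ℝ E]
    (K : Set E) (e : E) (x : E) : ℝ :=
  sInf {α | 0 ≤ α ∧ x + α • e ∈ K ∧ -x + α • e ∈ K}

/-- For `u ∈ K*`, the dual of the induced norm satisfies `‖u‖ₑ* = ⟪u, e⟫`. -/
theorem dualNorm_inducedNorm_eq_inner {E : Type*} [NormedAddCommGroup E]
    [InnerProductSpace ℝ E] [FiniteDimensional ℝ E] (K : Set E)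
    (hKclosed : IsClosed K) (hKconv : Convex ℝ K)
    (hKcone : ∀ ⦃c : ℝ⦄, 0 ≤ c → ∀ ⦃x⦄, x ∈ K → c • x ∈ K)
    (hKpointed : ∀ x ∈ K, -x ∈ K → x = 0)
    (e : E) (he : e ∈ interior K) (u : E) (hu : u ∈ dualCone K) :
    dualNorm (inducedNorm K e) u = ⟪u, e⟫ := by
  obtain ⟨ε, hεpos, hball⟩ := Metric.mem_nhds_iff.mp (mem_interior_iff_mem_nhds.mp he)
  have heK : e ∈ K := interior_subset he
  by_cases he0 : e = 0
  · -- degenerate case: e = 0 forces K = univ and E trivial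
    subst he0
    have hK : ∀ y : E, y ∈ K := by
      intro y
      rcases eq_or_ne y 0 with rfl | hy
      · exact heK
      · have hny : (0:ℝ) < ‖y‖ := norm_pos_iff.mpr hy
        have hc : (ε / (2 * ‖y‖)) • y ∈ K := by
          apply hball
          rw [Metric.mem_ball, dist_zero_right, norm_smul, Real.norm_eq_abs,
            abs_of_pos (by positivity)]
          have h : ε / (2 * ‖y‖) * ‖y‖ = ε / 2 := by field_simp
          rw [h]; linarith
        have := hKcone (c := (ε / (2 * ‖y‖))⁻¹) (by positivity) hc
        rwa [smul_smul, inv_mul_cancel₀ (by positivity), one_smul] at this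
    have hsub : ∀ y : E, y = 0 := fun y => hKpointed y (hK y) (hK (-y))
    have hu0 : u = 0 := hsub u
    have hNx : ∀ x : E, inducedNorm K (0:E) x = 0 := by
      intro x
      have : {α : ℝ | 0 ≤ α ∧ x + α • (0:E) ∈ K ∧ -x + α • (0:E) ∈ K} = Set.Ici 0 := by
        ext α; simp [hK _]
      rw [inducedNorm, this, csInf_Ici]
    have hempty : {r | ∃ x, inducedNorm K (0:E) x = 1 ∧ r = ⟪u, x⟫} = (∅ : Set ℝ) := by
      ext r
      simp only [Set.mem_setOf_eq, Set.mem_empty_iff_false, iff_false, not_exists]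
      intro x ⟨h1, _⟩
      rw [hNx x] at h1; exact one_ne_zero h1.symm
    rw [dualNorm, hempty, Real.sSup_empty, hu0, inner_zero_left]
  · -- main case: e ≠ 0
    -- key: the defining set of inducedNorm contains its infimum
    have hup : ∀ (y : E) (α : ℝ), 0 < α → ‖y‖ < ε * α → y + α • e ∈ K := by
      intro y α hα hlt
      have h1 : e + α⁻¹ • y ∈ Metric.ball e ε := by
        rw [Metric.mem_ball, dist_self_add_left, norm_smul, Real.norm_eq_abs,
          abs_of_pos (by positivity)]
        rw [inv_mul_lt_iff₀ hα, mul_comm]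
        exact hlt
      have h2 : α • (e + α⁻¹ • y) ∈ K := hKcone (le_of_lt hα) (hball h1)
      rwa [smul_add, smul_smul, mul_inv_cancel₀ (ne_of_gt hα), one_smul, add_comm] at h2
    have hmem : ∀ x : E, 0 ≤ inducedNorm K e x ∧
        x + inducedNorm K e x • e ∈ K ∧ -x + inducedNorm K e x • e ∈ K := by
      intro x
      have hne : {α : ℝ | 0 ≤ α ∧ x + α • e ∈ K ∧ -x + α • e ∈ K}.Nonempty := by
        refine ⟨‖x‖ / ε + 1, by positivity, ?_, ?_⟩
        · apply hup x _ (by positivity)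
          rw [mul_add, mul_one, mul_div_cancel₀ _ (ne_of_gt hεpos)]
          linarith
        · apply hup (-x) _ (by positivity)
          rw [norm_neg, mul_add, mul_one, mul_div_cancel₀ _ (ne_of_gt hεpos)]
          linarith
      have hbdd : BddBelow {α : ℝ | 0 ≤ α ∧ x + α • e ∈ K ∧ -x + α • e ∈ K} :=
        ⟨0, fun a ha => ha.1⟩
      have hcl : IsClosed {α : ℝ | 0 ≤ α ∧ x + α • e ∈ K ∧ -x + α • e ∈ K} := by
        have heq : {α : ℝ | 0 ≤ α ∧ x + α • e ∈ K ∧ -x + α • e ∈ K}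
            = Set.Ici 0 ∩ ((fun α : ℝ => x + α • e) ⁻¹' K ∩
              (fun α : ℝ => -x + α • e) ⁻¹' K) := by
          ext α; simp [Set.mem_Ici, and_assoc]
        rw [heq]
        exact isClosed_Ici.inter ((hKclosed.preimage (by fun_prop)).inter
          (hKclosed.preimage (by fun_prop)))
      exact hcl.csInf_mem hne hbdd
    have hub : ∀ r ∈ {r | ∃ x, inducedNorm K e x = 1 ∧ r = ⟪u, x⟫}, r ≤ ⟪u, e⟫ := by
      rintro r ⟨x, hx1, rfl⟩
      have h := (hmem x).2.2
      rw [hx1, one_smul] at h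
      have h2 : (0:ℝ) ≤ ⟪u, -x + e⟫ := hu _ h
      rw [inner_add_right, inner_neg_right] at h2
      linarith
    have hNe : inducedNorm K e e = 1 := by
      have hset : {α : ℝ | 0 ≤ α ∧ e + α • e ∈ K ∧ -e + α • e ∈ K} = Set.Ici 1 := by
        ext α
        constructor
        · rintro ⟨hα0, -, h2⟩
          by_contra hlt
          rw [Set.mem_Ici] at hlt
          push_neg at hlt
          have h3 : (1 - α) • e ∈ K := hKcone (by linarith) heK
          have h4 : -e + α • e = -((1 - α) • e) := by module
          rw [h4] at h2
          have h5 := hKpointed _ h3 h2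
          rcases smul_eq_zero.mp h5 with h6 | h6
          · linarith [h6]
          · exact he0 h6
        · intro hα
          rw [Set.mem_Ici] at hα
          refine ⟨by linarith, ?_, ?_⟩
          · have h : e + α • e = (1 + α) • e := by module
            rw [h]; exact hKcone (by linarith) heK
          · have h : -e + α • e = (α - 1) • e := by module
            rw [h]; exact hKcone (by linarith) heK
      rw [inducedNorm, hset, csInf_Ici]
    have hbddA : BddAbove {r | ∃ x, inducedNorm K e x = 1 ∧ r = ⟪u, x⟫} := ⟨⟪u, e⟫, hub⟩
    have hge : ⟪u, e⟫ ≤ dualNorm (inducedNorm K e) u :=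
      le_csSup hbddA ⟨e, hNe, rfl⟩
    have hle : dualNorm (inducedNorm K e) u ≤ ⟪u, e⟫ := Real.sSup_le hub (hu e heK)
    linarith
end

section
/- Let K ⊆ E be a regular closed convex cone and e ∈ int(K). The induced eigenvalue mapping λ_e(x) := max{t ∈ ℝ : x − te ∈ K} satisfies λ_e(x) = min{⟨u,x⟩ : u ∈ K*, ⟨u,e⟩ = 1}. -/
open RealInnerProductSpace

/-- The eigenvalue mapping `λₑ(x) = max {t : x − te ∈ K}` induced by `(K, e)`. -/
noncomputable def inducedEig {E : Type*} [NormedAddCommGroup E] [InnerProductSpace ℝ E]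
    (K : Set E) (e : E) (x : E) : ℝ :=
  sSup {t | x - t • e ∈ K}

/-- Separation: if `y ∉ K`, there is `u ∈ K*` with `⟪u,e⟫ = 1` and `⟪u,y⟫ < 0`. -/
lemma sep_lemma {E : Type*} [NormedAddCommGroup E] [InnerProductSpace ℝ E]
    [FiniteDimensional ℝ E] {K : Set E}
    (hKclosed : IsClosed K) (hKconv : Convex ℝ K)
    (hKcone : ∀ ⦃c : ℝ⦄, 0 ≤ c → ∀ ⦃x⦄, x ∈ K → c • x ∈ K)
    {e : E} (he : e ∈ interior K) {y : E} (hy : y ∉ K) :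
    ∃ u ∈ dualCone K, ⟪u, e⟫ = 1 ∧ ⟪u, y⟫ < 0 := by
  have heK : e ∈ K := interior_subset he
  have h0K : (0 : E) ∈ K := by
    have := hKcone le_rfl heK
    simpa using this
  obtain ⟨f, s, hfy, hfK⟩ := geometric_hahn_banach_point_closed hKconv hKclosed hy
  have hs0 : s < 0 := by simpa using hfK 0 h0K
  have hfnonneg : ∀ b ∈ K, 0 ≤ f b := by
    intro b hb
    by_contra h
    push_neg at h
    have hfb : f b ≠ 0 := ne_of_lt h
    have hc : (0:ℝ) ≤ (s - 1) / f b := by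
      rw [div_nonneg_iff]
      right
      constructor <;> linarith
    have := hfK _ (hKcone hc hb)
    rw [map_smul] at this
    have : s < s - 1 := by
      rwa [smul_eq_mul, div_mul_cancel₀ _ hfb] at this
    linarith
  set u₀ : E := (InnerProductSpace.toDual ℝ E).symm f with hu₀
  have key : ∀ z : E, ⟪u₀, z⟫ = f z := fun z =>
    InnerProductSpace.toDual_symm_apply
  have hu₀K : u₀ ∈ dualCone K := fun b hb => by rw [key]; exact hfnonneg b hb
  have hu₀y : ⟪u₀, y⟫ < 0 := by rw [key]; linarith
  have hu₀ne : u₀ ≠ 0 := by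
    intro h
    rw [h, inner_zero_left] at hu₀y
    exact lt_irrefl _ hu₀y
  have hu₀norm : 0 < ‖u₀‖ := norm_pos_iff.mpr hu₀ne
  -- e in the interior: get a ball
  obtain ⟨ε, hε, hball⟩ := Metric.mem_nhds_iff.mp (mem_interior_iff_mem_nhds.mp he)
  have hu₀e : 0 < ⟪u₀, e⟫ := by
    set z : E := e - (ε / 2 / ‖u₀‖) • u₀ with hz
    have hzball : z ∈ Metric.ball e ε := by
      rw [Metric.mem_ball, dist_eq_norm]
      have : z - e = -((ε / 2 / ‖u₀‖) • u₀) := by rw [hz]; abel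
      rw [this, norm_neg, norm_smul, Real.norm_eq_abs,
        abs_of_nonneg (by positivity), div_mul_cancel₀ _ (ne_of_gt hu₀norm)]
      linarith
    have hzK : z ∈ K := hball hzball
    have h1 : (0:ℝ) ≤ ⟪u₀, z⟫ := hu₀K z hzK
    have h2 : ⟪u₀, z⟫ = ⟪u₀, e⟫ - (ε / 2 / ‖u₀‖) * ‖u₀‖ ^ 2 := by
      rw [hz, inner_sub_right, real_inner_smul_right, real_inner_self_eq_norm_sq]
    have h3 : (ε / 2 / ‖u₀‖) * ‖u₀‖ ^ 2 = (ε / 2) * ‖u₀‖ := by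
      field_simp
    nlinarith [mul_pos (half_pos hε) hu₀norm]
  refine ⟨(⟪u₀, e⟫)⁻¹ • u₀, ?_, ?_, ?_⟩
  · intro b hb
    rw [real_inner_smul_left]
    exact mul_nonneg (inv_nonneg.mpr hu₀e.le) (hu₀K b hb)
  · rw [real_inner_smul_left, inv_mul_cancel₀ (ne_of_gt hu₀e)]
  · rw [real_inner_smul_left]
    exact mul_neg_of_pos_of_neg (inv_pos.mpr hu₀e) hu₀y

/-- `λₑ(x) = min {⟪u,x⟫ : u ∈ K*, ⟪u,e⟫ = 1}`. -/
theorem inducedEig_eq_min_inner {E : Type*} [NormedAddCommGroup E]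
    [InnerProductSpace ℝ E] [FiniteDimensional ℝ E] (K : Set E)
    (hKclosed : IsClosed K) (hKconv : Convex ℝ K)
    (hKcone : ∀ ⦃c : ℝ⦄, 0 ≤ c → ∀ ⦃x⦄, x ∈ K → c • x ∈ K)
    (hKpointed : ∀ x ∈ K, -x ∈ K → x = 0)
    (e : E) (he : e ∈ interior K) (x : E) :
    inducedEig K e x = sInf {r | ∃ u ∈ dualCone K, ⟪u, e⟫ = 1 ∧ r = ⟪u, x⟫} := by
  classical
  set S : Set ℝ := {t | x - t • e ∈ K} with hSdef
  set T : Set ℝ := {r | ∃ u ∈ dualCone K, ⟪u, e⟫ = 1 ∧ r = ⟪u, x⟫} with hTdef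
  have heK : e ∈ K := interior_subset he
  rcases subsingleton_or_nontrivial E with hE | hE
  · -- trivial space: S = univ, T = ∅, both sides are 0
    have hSuniv : S = Set.univ := by
      ext t
      simp only [hSdef, Set.mem_setOf_eq, Set.mem_univ, iff_true]
      have : x - t • e = e := Subsingleton.elim _ _
      rw [this]; exact heK
    have hTempty : T = ∅ := by
      ext r
      simp only [hTdef, Set.mem_setOf_eq, Set.mem_empty_iff_false, iff_false]
      rintro ⟨u, -, hue, -⟩
      have : u = 0 := Subsingleton.elim _ _
      rw [this, inner_zero_left] at hue
      norm_num at hue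
    rw [inducedEig]
    show sSup S = sInf T
    rw [hSuniv, hTempty, Real.sInf_empty, Real.sSup_univ]
  · -- nontrivial space
    -- S is nonempty
    obtain ⟨ε, hε, hball⟩ := Metric.mem_nhds_iff.mp (mem_interior_iff_mem_nhds.mp he)
    have hSne : S.Nonempty := by
      set s : ℝ := (‖x‖ + 1) / ε with hs
      have hspos : 0 < s := by positivity
      refine ⟨-s, ?_⟩
      simp only [hSdef, Set.mem_setOf_eq, neg_smul, sub_neg_eq_add]
      have hmem : e + s⁻¹ • x ∈ Metric.ball e ε := by
        rw [Metric.mem_ball, dist_eq_norm]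
        have : e + s⁻¹ • x - e = s⁻¹ • x := by abel
        rw [this, norm_smul, Real.norm_eq_abs, abs_of_nonneg (inv_nonneg.mpr hspos.le)]
        rw [hs, inv_div, div_mul_eq_mul_div, div_lt_iff₀ (by positivity)]
        nlinarith [norm_nonneg x]
      have hK' : e + s⁻¹ • x ∈ K := hball hmem
      have := hKcone hspos.le hK'
      rw [smul_add, smul_smul, mul_inv_cancel₀ (ne_of_gt hspos), one_smul] at this
      convert this using 1
      abel
    -- T is nonempty: find a point outside K and separate
    have hTne : T.Nonempty := by
      obtain ⟨w, hw⟩ := exists_ne (0 : E)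
      have : w ∉ K ∨ -w ∉ K := by
        by_contra h
        push_neg at h
        exact hw (hKpointed w h.1 h.2)
      rcases this with h | h
      · obtain ⟨u, huK, hue, -⟩ := sep_lemma hKclosed hKconv hKcone he h
        exact ⟨⟪u, x⟫, u, huK, hue, rfl⟩
      · obtain ⟨u, huK, hue, -⟩ := sep_lemma hKclosed hKconv hKcone he h
        exact ⟨⟪u, x⟫, u, huK, hue, rfl⟩
    -- every element of S is ≤ every element of T
    have hub : ∀ t ∈ S, ∀ r ∈ T, t ≤ r := by
      rintro t ht r ⟨u, huK, hue, rfl⟩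
      have := huK _ ht
      rw [inner_sub_right, real_inner_smul_right, hue, mul_one] at this
      linarith
    obtain ⟨r₀, hr₀⟩ := id hTne
    obtain ⟨t₀, ht₀⟩ := id hSne
    have hSbdd : BddAbove S := ⟨r₀, fun t ht => hub t ht r₀ hr₀⟩
    have hTbdd : BddBelow T := ⟨t₀, fun r hr => hub t₀ ht₀ r hr⟩
    have h1 : sSup S ≤ sInf T :=
      le_csInf hTne (fun r hr => csSup_le hSne (fun t ht => hub t ht r hr))
    have h2 : sInf T ≤ sSup S := by
      apply le_of_forall_pos_le_add
      intro δ hδ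
      have hy : x - (sSup S + δ) • e ∉ K := by
        intro hmem
        have : sSup S + δ ∈ S := hmem
        have := le_csSup hSbdd this
        linarith
      obtain ⟨u, huK, hue, huy⟩ := sep_lemma hKclosed hKconv hKcone he hy
      rw [inner_sub_right, real_inner_smul_right, hue, mul_one, sub_neg] at huy
      have hmemT : ⟪u, x⟫ ∈ T := ⟨u, huK, hue, rfl⟩
      have := csInf_le hTbdd hmemT
      linarith
    rw [inducedEig]
    exact le_antisymm h1 h2
end

section
/- Let K ⊆ E be a regular closed convex cone, e ∈ int(K), and take ‖·‖ = ‖·‖_e, the norm induced by (K,e). Then for any linear subspace L ⊆ E, ν(L) := min{‖u−y‖_e* : u ∈ K*, y ∈ L^⊥, ⟨u,e⟩ = 1} equals max{λ_e(x) : x ∈ L, ‖x‖_e ≤ 1}, where λ_e(x) = max{t : x − te ∈ K}. -/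
/-!
Weak duality: for `u ∈ K*` with `⟪u, e⟫ = 1`, `y ∈ Lᗮ` and `x ∈ L` with `‖x‖ₑ ≤ 1`,
`λₑ(x) ≤ ⟪u, x⟫ = ⟪u - y, x⟫ ≤ ‖u - y‖ₑ*`, because `⟪u, x - t e⟫ ≥ 0` whenever `x - t e ∈ K`.

Strong duality: if `c` exceeds `max λₑ` over the unit ball of `L`, the compact convex set
`(L ∩ {‖x‖ₑ ≤ 1}) - c e` misses `K`. Separating it from the cone gives `u ∈ K*` with
`⟪u, e⟫ = 1` and `⟪u, x⟫ ≤ c` on the unit ball of `L`. Extending `⟪u, ·⟫|_L` by Hahn–Banach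
under the sublinear bound `c ‖·‖ₑ` gives `w` with `‖w‖ₑ* ≤ c` and `y := u - w ∈ Lᗮ`.
-/

open RealInnerProductSpace

structure IsClosedConvexCone {E : Type*} [AddCommGroup E] [Module ℝ E] [TopologicalSpace E]
    (K : Set E) : Prop where
  isClosed : IsClosed K
  convex : Convex ℝ K
  smul_mem : ∀ ⦃c : ℝ⦄, 0 ≤ c → ∀ ⦃x⦄, x ∈ K → c • x ∈ K

section

variable {E : Type*} [NormedAddCommGroup E] [InnerProductSpace ℝ E] {K : Set E} {e x y : E}
  {L : Submodule ℝ E}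

theorem inducedNorm_le {α : ℝ} (h₀ : 0 ≤ α) (h₁ : x + α • e ∈ K) (h₂ : -x + α • e ∈ K) :
    inducedNorm K e x ≤ α :=
  csInf_le ⟨0, fun _ h => h.1⟩ ⟨h₀, h₁, h₂⟩

theorem inducedNorm_neg (x : E) : inducedNorm K e (-x) = inducedNorm K e x := by
  simp only [inducedNorm, neg_neg, and_comm (a := -x + _ ∈ K)]

def nuValues (K : Set E) (e : E) (L : Submodule ℝ E) : Set ℝ :=
  {r | ∃ u y, u ∈ dualCone K ∧ y ∈ Lᗮ ∧ ⟪u, e⟫ = 1 ∧ r = dualNorm (inducedNorm K e) (u - y)}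

def eigValues (K : Set E) (e : E) (L : Submodule ℝ E) : Set ℝ :=
  {r | ∃ x ∈ L, inducedNorm K e x ≤ 1 ∧ r = inducedEig K e x}

theorem sInf_nuValues_eq_sSup_eigValues_of_subsingleton [Subsingleton E] (he : e ∈ K)
    (L : Submodule ℝ E) : sInf (nuValues K e L) = sSup (eigValues K e L) := by
  -- here `e = 0`: `nuValues` is empty and `λₑ x = sSup univ`, so both sides are the junk value `0`
  have heig (x : E) : inducedEig K e x = 0 := by
    have hall : {t : ℝ | x - t • e ∈ K} = Set.univ :=
      Set.eq_univ_of_forall fun t => by rwa [Set.mem_ofPred_eq, Subsingleton.elim (x - t • e) e]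
    rw [inducedEig, hall, Real.sSup_univ]
  have hue (u : E) : ⟪u, e⟫ ≠ 1 := by simp [Subsingleton.elim e 0]
  simp only [nuValues, eigValues, hue, heig, false_and, and_false, exists_false,
    Set.ofPred_false, Real.sInf_empty]
  refine le_antisymm (Real.sSup_nonneg ?_) (Real.sSup_nonpos ?_) <;>
    rintro _ ⟨x, -, -, rfl⟩ <;> rfl

namespace IsClosedConvexCone

theorem add_mem (hK : IsClosedConvexCone K) (hx : x ∈ K) (hy : y ∈ K) : x + y ∈ K := by
  have h := hK.smul_mem zero_le_two
    (hK.convex hx hy (by norm_num : (0 : ℝ) ≤ 1 / 2) (by norm_num) (add_halves 1))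
  rwa [smul_add, smul_smul, smul_smul, mul_one_div_cancel two_ne_zero, one_smul, one_smul] at h

theorem zero_mem_of_mem (hK : IsClosedConvexCone K) (hx : x ∈ K) : (0 : E) ∈ K := by
  simpa using hK.smul_mem le_rfl hx

theorem exists_forall_add_smul_mem (hK : IsClosedConvexCone K) (he : e ∈ interior K) :
    ∃ C : ℝ, 0 ≤ C ∧ ∀ x : E, x + (C * ‖x‖) • e ∈ K := by
  obtain ⟨δ, hδ, hball⟩ := Metric.mem_nhds_iff.mp (mem_interior_iff_mem_nhds.mp he)
  refine ⟨2 / δ, by positivity, fun x => ?_⟩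
  rcases eq_or_ne x 0 with rfl | hx
  · simpa using hK.zero_mem_of_mem (interior_subset he)
  have hc : 0 < 2 / δ * ‖x‖ := by positivity
  have hmem : e + (2 / δ * ‖x‖)⁻¹ • x ∈ K := hball <| by
    rw [Metric.mem_ball, dist_eq_norm, add_sub_cancel_left, norm_smul, norm_inv, Real.norm_eq_abs,
      abs_of_pos hc]
    field_simp
    linarith
  have h := hK.smul_mem hc.le hmem
  rwa [smul_add, smul_inv_smul₀ hc.ne', add_comm] at h

theorem inducedNorm_mem (hK : IsClosedConvexCone K) (he : e ∈ interior K) (x : E) :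
    0 ≤ inducedNorm K e x ∧ x + inducedNorm K e x • e ∈ K ∧ -x + inducedNorm K e x • e ∈ K := by
  obtain ⟨C, hC, hCx⟩ := hK.exists_forall_add_smul_mem he
  have hclosed : IsClosed {α : ℝ | 0 ≤ α ∧ x + α • e ∈ K ∧ -x + α • e ∈ K} :=
    (isClosed_le continuous_const continuous_id).inter
      ((hK.isClosed.preimage (by fun_prop)).inter (hK.isClosed.preimage (by fun_prop)))
  exact hclosed.csInf_mem ⟨C * ‖x‖, by positivity, hCx x, by simpa using hCx (-x)⟩
    ⟨0, fun _ h => h.1⟩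

theorem inducedNorm_zero (hK : IsClosedConvexCone K) (he : e ∈ interior K) :
    inducedNorm K e 0 = 0 := by
  have h0 : (0 : E) + (0 : ℝ) • e ∈ K := by simpa using hK.zero_mem_of_mem (interior_subset he)
  exact le_antisymm (inducedNorm_le le_rfl h0 (by simpa using h0)) (hK.inducedNorm_mem he 0).1

theorem inducedNorm_smul_le (hK : IsClosedConvexCone K) (he : e ∈ interior K) (x : E) {c : ℝ}
    (hc : 0 ≤ c) : inducedNorm K e (c • x) ≤ c * inducedNorm K e x := by
  obtain ⟨h₀, h₁, h₂⟩ := hK.inducedNorm_mem he x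
  refine inducedNorm_le (by positivity) ?_ ?_
  · simpa [smul_add, smul_smul] using hK.smul_mem hc h₁
  · simpa [smul_add, smul_smul] using hK.smul_mem hc h₂

theorem inducedNorm_smul (hK : IsClosedConvexCone K) (he : e ∈ interior K) (x : E) {c : ℝ}
    (hc : 0 ≤ c) : inducedNorm K e (c • x) = c * inducedNorm K e x := by
  rcases hc.eq_or_lt with rfl | hc
  · simp [hK.inducedNorm_zero he]
  refine le_antisymm (hK.inducedNorm_smul_le he x hc.le) ?_
  have h := hK.inducedNorm_smul_le he (c • x) (inv_nonneg.mpr hc.le)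
  rwa [inv_smul_smul₀ hc.ne', le_inv_mul_iff₀ hc] at h

theorem inducedNorm_add_le (hK : IsClosedConvexCone K) (he : e ∈ interior K) (x y : E) :
    inducedNorm K e (x + y) ≤ inducedNorm K e x + inducedNorm K e y := by
  obtain ⟨hx₀, hx₁, hx₂⟩ := hK.inducedNorm_mem he x
  obtain ⟨hy₀, hy₁, hy₂⟩ := hK.inducedNorm_mem he y
  refine inducedNorm_le (by positivity) ?_ ?_
  · convert hK.add_mem hx₁ hy₁ using 1; rw [add_smul]; abel
  · convert hK.add_mem hx₂ hy₂ using 1; rw [add_smul]; abel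

theorem continuous_inducedNorm (hK : IsClosedConvexCone K) (he : e ∈ interior K) :
    Continuous (inducedNorm K e) := by
  obtain ⟨C, hC, hCx⟩ := hK.exists_forall_add_smul_mem he
  refine (LipschitzWith.of_le_add_mul' C fun x y => ?_).continuous
  have hxy : inducedNorm K e (x - y) ≤ C * ‖x - y‖ :=
    inducedNorm_le (by positivity) (hCx _) (by simpa [norm_sub_rev y x] using hCx (-(x - y)))
  calc inducedNorm K e x = inducedNorm K e (y + (x - y)) := by rw [add_sub_cancel]
    _ ≤ inducedNorm K e y + C * dist x y := by
      rw [dist_eq_norm]; linarith [hK.inducedNorm_add_le he y (x - y)]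

theorem ne_zero_of_pointed [Nontrivial E] (hK : IsClosedConvexCone K) (he : e ∈ interior K)
    (hKpointed : ∀ x ∈ K, -x ∈ K → x = 0) : e ≠ 0 := by
  rintro rfl
  obtain ⟨C, -, hC⟩ := hK.exists_forall_add_smul_mem he
  obtain ⟨x, hx⟩ := exists_ne (0 : E)
  exact hx (hKpointed x (by simpa using hC x) (by simpa using hC (-x)))

theorem nonneg_of_smul_mem [Nontrivial E] (hK : IsClosedConvexCone K) (he : e ∈ interior K)
    (hKpointed : ∀ x ∈ K, -x ∈ K → x = 0) {s : ℝ} (hs : s • e ∈ K) : 0 ≤ s := by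
  by_contra! hneg
  have h := hK.smul_mem (inv_nonneg.mpr (neg_nonneg.mpr hneg.le)) hs
  rw [smul_smul, inv_mul_eq_div, div_neg, div_self hneg.ne, neg_one_smul] at h
  exact hK.ne_zero_of_pointed he hKpointed (hKpointed e (interior_subset he) h)

theorem inducedNorm_pos (hK : IsClosedConvexCone K) (he : e ∈ interior K)
    (hKpointed : ∀ x ∈ K, -x ∈ K → x = 0) (hx : x ≠ 0) : 0 < inducedNorm K e x := by
  obtain ⟨h₀, h₁, h₂⟩ := hK.inducedNorm_mem he x
  refine h₀.lt_of_ne fun h => hx (hKpointed x ?_ ?_)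
  · simpa [← h] using h₁
  · simpa [← h] using h₂

theorem inducedNorm_self [Nontrivial E] (hK : IsClosedConvexCone K) (he : e ∈ interior K)
    (hKpointed : ∀ x ∈ K, -x ∈ K → x = 0) : inducedNorm K e e = 1 := by
  have heK := interior_subset he
  refine le_antisymm (inducedNorm_le zero_le_one ?_ ?_) ?_
  · simpa using hK.add_mem heK heK
  · simpa using hK.zero_mem_of_mem heK
  · have h : (inducedNorm K e e - 1) • e ∈ K := by
      simpa [sub_smul, neg_add_eq_sub] using (hK.inducedNorm_mem he e).2.2
    linarith [hK.nonneg_of_smul_mem he hKpointed h]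

theorem le_inducedNorm_of_sub_smul_mem [Nontrivial E] (hK : IsClosedConvexCone K)
    (he : e ∈ interior K) (hKpointed : ∀ x ∈ K, -x ∈ K → x = 0) {t : ℝ} (ht : x - t • e ∈ K) :
    t ≤ inducedNorm K e x := by
  have h := hK.add_mem ht (hK.inducedNorm_mem he x).2.2
  rw [show x - t • e + (-x + inducedNorm K e x • e) = (inducedNorm K e x - t) • e by
    rw [sub_smul]; abel] at h
  linarith [hK.nonneg_of_smul_mem he hKpointed h]

theorem le_inducedEig [Nontrivial E] (hK : IsClosedConvexCone K) (he : e ∈ interior K)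
    (hKpointed : ∀ x ∈ K, -x ∈ K → x = 0) {t : ℝ} (ht : x - t • e ∈ K) :
    t ≤ inducedEig K e x :=
  le_csSup ⟨_, fun _ => hK.le_inducedNorm_of_sub_smul_mem he hKpointed⟩ ht

theorem inducedEig_le (hK : IsClosedConvexCone K) (he : e ∈ interior K) {b : ℝ}
    (hb : ∀ t, x - t • e ∈ K → t ≤ b) : inducedEig K e x ≤ b :=
  csSup_le ⟨-inducedNorm K e x, by simpa [sub_eq_add_neg] using (hK.inducedNorm_mem he x).2.1⟩ hb

theorem inducedEig_le_inducedNorm [Nontrivial E] (hK : IsClosedConvexCone K)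
    (he : e ∈ interior K) (hKpointed : ∀ x ∈ K, -x ∈ K → x = 0) :
    inducedEig K e x ≤ inducedNorm K e x :=
  hK.inducedEig_le he fun _ => hK.le_inducedNorm_of_sub_smul_mem he hKpointed

theorem inducedEig_le_inner (hK : IsClosedConvexCone K) (he : e ∈ interior K) {u : E}
    (hu : u ∈ dualCone K) (hue : ⟪u, e⟫ = 1) : inducedEig K e x ≤ ⟪u, x⟫ :=
  hK.inducedEig_le he fun t ht => by
    have h := hu _ ht
    rw [inner_sub_right, real_inner_smul_right, hue, mul_one] at h
    linarith

theorem convex_inducedNorm_le_one (hK : IsClosedConvexCone K) (he : e ∈ interior K) :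
    Convex ℝ {x | inducedNorm K e x ≤ 1} := by
  intro x hx y hy a b ha hb hab
  calc inducedNorm K e (a • x + b • y)
      ≤ a * inducedNorm K e x + b * inducedNorm K e y := by
        rw [← hK.inducedNorm_smul he x ha, ← hK.inducedNorm_smul he y hb]
        exact hK.inducedNorm_add_le he _ _
    _ ≤ a * 1 + b * 1 := by gcongr <;> assumption
    _ = 1 := by rw [mul_one, mul_one, hab]

theorem isCompact_inducedNorm_le_one [FiniteDimensional ℝ E] [Nontrivial E]
    (hK : IsClosedConvexCone K) (he : e ∈ interior K) (hKpointed : ∀ x ∈ K, -x ∈ K → x = 0) :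
    IsCompact {x | inducedNorm K e x ≤ 1} := by
  have hcont := hK.continuous_inducedNorm he
  obtain ⟨z, hz, hmin⟩ := (isCompact_sphere (0 : E) 1).exists_isMinOn
    (NormedSpace.sphere_nonempty.mpr zero_le_one) hcont.continuousOn
  have hm : 0 < inducedNorm K e z :=
    hK.inducedNorm_pos he hKpointed (ne_zero_of_mem_unit_sphere ⟨z, hz⟩)
  refine (isCompact_closedBall (0 : E) (inducedNorm K e z)⁻¹).of_isClosed_subset
    (isClosed_le hcont continuous_const) fun x hx => ?_
  rw [mem_closedBall_zero_iff]
  rcases eq_or_ne x 0 with rfl | hx0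
  · simpa using hm.le
  have hxpos := norm_pos_iff.mpr hx0
  have h : inducedNorm K e z ≤ ‖x‖⁻¹ * inducedNorm K e x := by
    rw [← hK.inducedNorm_smul he x (inv_nonneg.mpr hxpos.le)]
    exact hmin (by simp [norm_smul, hxpos.ne'])
  rw [le_inv_comm₀ hxpos hm]
  calc inducedNorm K e z ≤ ‖x‖⁻¹ * inducedNorm K e x := h
    _ ≤ ‖x‖⁻¹ := mul_le_of_le_one_right (inv_nonneg.mpr hxpos.le) hx

theorem inner_le_mul_inducedNorm (hK : IsClosedConvexCone K) (he : e ∈ interior K)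
    (hKpointed : ∀ x ∈ K, -x ∈ K → x = 0) {u : E} {c : ℝ}
    (h : ∀ x ∈ L, inducedNorm K e x = 1 → ⟪u, x⟫ ≤ c) (hx : x ∈ L) :
    ⟪u, x⟫ ≤ c * inducedNorm K e x := by
  rcases eq_or_ne x 0 with rfl | hx0
  · simp [hK.inducedNorm_zero he]
  have hn := hK.inducedNorm_pos he hKpointed hx0
  have h' := h _ (L.smul_mem (inducedNorm K e x)⁻¹ hx) <| by
    rw [hK.inducedNorm_smul he x (inv_nonneg.mpr hn.le), inv_mul_cancel₀ hn.ne']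
  rwa [real_inner_smul_right, inv_mul_le_iff₀ hn, mul_comm] at h'

theorem inner_le_dualNorm [FiniteDimensional ℝ E] [Nontrivial E] (hK : IsClosedConvexCone K)
    (he : e ∈ interior K) (hKpointed : ∀ x ∈ K, -x ∈ K → x = 0) (w : E)
    (hx : inducedNorm K e x ≤ 1) : ⟪w, x⟫ ≤ dualNorm (inducedNorm K e) w := by
  set D := dualNorm (inducedNorm K e) w
  have hbdd : BddAbove {r | ∃ x, inducedNorm K e x = 1 ∧ r = ⟪w, x⟫} :=
    ((hK.isCompact_inducedNorm_le_one he hKpointed).bddAbove_image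
      (continuous_const.inner continuous_id).continuousOn).mono
      (by rintro _ ⟨x, hx, rfl⟩; exact ⟨x, hx.le, rfl⟩)
  have hD : ∀ z : E, ⟪w, z⟫ ≤ D * inducedNorm K e z := fun z =>
    hK.inner_le_mul_inducedNorm he hKpointed (L := ⊤)
      (fun z _ hz => le_csSup hbdd ⟨z, hz, rfl⟩) Submodule.mem_top
  have hD0 : 0 ≤ D := by
    have h₁ := hD e
    have h₂ := hD (-e)
    rw [inducedNorm_neg, inner_neg_right, hK.inducedNorm_self he hKpointed] at h₂
    rw [hK.inducedNorm_self he hKpointed] at h₁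
    linarith
  exact (hD x).trans (mul_le_of_le_one_right hD0 hx)

theorem dualNorm_le [Nontrivial E] (hK : IsClosedConvexCone K) (he : e ∈ interior K)
    (hKpointed : ∀ x ∈ K, -x ∈ K → x = 0) {w : E} {c : ℝ}
    (h : ∀ x, ⟪w, x⟫ ≤ c * inducedNorm K e x) : dualNorm (inducedNorm K e) w ≤ c :=
  csSup_le ⟨_, e, hK.inducedNorm_self he hKpointed, rfl⟩ <| by
    rintro _ ⟨x, hx, rfl⟩
    simpa [hx] using h x

theorem exists_mem_dualCone_forall_inner_neg [CompleteSpace E] {S : Set E}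
    (hK : IsClosedConvexCone K) (hK0 : (0 : E) ∈ K) (hSc : IsCompact S) (hSv : Convex ℝ S)
    (hSK : Disjoint S K) : ∃ u ∈ dualCone K, ∀ x ∈ S, ⟪u, x⟫ < 0 := by
  obtain ⟨f, a, b, hfa, hab, hfb⟩ :=
    geometric_hahn_banach_compact_closed hSv hSc hK.convex hK.isClosed hSK
  have hb : b < 0 := by simpa using hfb 0 hK0
  have hfK : ∀ k ∈ K, 0 ≤ f k := fun k hk => by
    by_contra! hk'
    have h := hfb _ (hK.smul_mem (div_nonneg_of_nonpos (a := b - 1) (by linarith) hk'.le) hk)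
    rw [map_smul, smul_eq_mul, div_mul_cancel₀ (b - 1) hk'.ne] at h
    linarith
  refine ⟨(InnerProductSpace.toDual ℝ E).symm f, fun k hk => ?_, fun x hx => ?_⟩
  · rw [InnerProductSpace.toDual_symm_apply]
    exact hfK k hk
  · rw [InnerProductSpace.toDual_symm_apply]
    linarith [hfa x hx]

theorem exists_mem_dualCone_forall_inner_lt [CompleteSpace E] {S : Set E}
    (hK : IsClosedConvexCone K) (he : e ∈ K) (hSc : IsCompact S) (hSv : Convex ℝ S)
    (hS0 : (0 : E) ∈ S) {c : ℝ} (hS : ∀ x ∈ S, x - c • e ∉ K) :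
    ∃ u ∈ dualCone K, ⟪u, e⟫ = 1 ∧ ∀ x ∈ S, ⟪u, x⟫ < c := by
  obtain ⟨v, hvK, hv⟩ := exists_mem_dualCone_forall_inner_neg hK (hK.zero_mem_of_mem he)
    (hSc.image (continuous_const_add _)) (hSv.translate (-(c • e)))
    (Set.disjoint_left.mpr (by rintro _ ⟨x, hx, rfl⟩; simpa [neg_add_eq_sub] using hS x hx))
  have hv' : ∀ x ∈ S, ⟪v, x⟫ < c * ⟪v, e⟫ := fun x hx => by
    have h := hv _ ⟨x, hx, rfl⟩
    rw [inner_add_right, inner_neg_right, real_inner_smul_right] at h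
    linarith
  have hve : 0 < ⟪v, e⟫ := (hvK e he).lt_of_ne fun h => by
    simpa [← h] using hv' 0 hS0
  refine ⟨⟪v, e⟫⁻¹ • v, fun k hk => ?_, ?_, fun x hx => ?_⟩
  · rw [real_inner_smul_left]
    exact mul_nonneg (inv_nonneg.mpr hve.le) (hvK k hk)
  · rw [real_inner_smul_left, inv_mul_cancel₀ hve.ne']
  · rw [real_inner_smul_left, inv_mul_lt_iff₀ hve, mul_comm]
    exact hv' x hx

theorem exists_mem_orthogonal_dualNorm_sub_le [FiniteDimensional ℝ E] [Nontrivial E]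
    (hK : IsClosedConvexCone K) (he : e ∈ interior K) (hKpointed : ∀ x ∈ K, -x ∈ K → x = 0)
    {u : E} {c : ℝ} (hc : 0 ≤ c)
    (hu : ∀ x ∈ L, inducedNorm K e x ≤ 1 → ⟪u, x⟫ ≤ c) :
    ∃ y ∈ Lᗮ, dualNorm (inducedNorm K e) (u - y) ≤ c := by
  obtain ⟨g, hgu, hgN⟩ := exists_extension_of_le_sublinear ⟨L, (innerₛₗ ℝ u).comp L.subtype⟩
    (fun x => c * inducedNorm K e x)
    (fun a ha x => by simp only [hK.inducedNorm_smul he x ha.le]; ring)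
    (fun x y => by simpa only [mul_add] using
      mul_le_mul_of_nonneg_left (hK.inducedNorm_add_le he x y) hc)
    (fun x => hK.inner_le_mul_inducedNorm he hKpointed (fun z hz hz1 => hu z hz hz1.le) x.2)
  set w := (InnerProductSpace.toDual ℝ E).symm (LinearMap.toContinuousLinearMap g)
  have hw : ∀ z, ⟪w, z⟫ = g z := fun z => InnerProductSpace.toDual_symm_apply
  refine ⟨u - w, (Submodule.mem_orthogonal' L _).mpr fun x hx => ?_, ?_⟩
  · rw [inner_sub_left, hw, hgu ⟨x, hx⟩]
    exact sub_self _
  · rw [sub_sub_cancel]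
    exact hK.dualNorm_le he hKpointed fun x => (hw x).trans_le (hgN x)

theorem inducedEig_le_dualNorm [FiniteDimensional ℝ E] [Nontrivial E]
    (hK : IsClosedConvexCone K) (he : e ∈ interior K)
    (hKpointed : ∀ x ∈ K, -x ∈ K → x = 0) {u y x : E} (hu : u ∈ dualCone K) (hue : ⟪u, e⟫ = 1)
    (hy : y ∈ Lᗮ) (hx : x ∈ L) (hx1 : inducedNorm K e x ≤ 1) :
    inducedEig K e x ≤ dualNorm (inducedNorm K e) (u - y) :=
  calc inducedEig K e x ≤ ⟪u, x⟫ := hK.inducedEig_le_inner he hu hue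
    _ = ⟪u - y, x⟫ := by
      rw [inner_sub_left, (Submodule.mem_orthogonal' L y).mp hy x hx, sub_zero]
    _ ≤ dualNorm (inducedNorm K e) (u - y) := hK.inner_le_dualNorm he hKpointed _ hx1

theorem exists_dualNorm_le_of_inducedEig_le [FiniteDimensional ℝ E] [Nontrivial E]
    (hK : IsClosedConvexCone K) (he : e ∈ interior K)
    (hKpointed : ∀ x ∈ K, -x ∈ K → x = 0) {ν c : ℝ}
    (hν : ∀ x ∈ L, inducedNorm K e x ≤ 1 → inducedEig K e x ≤ ν) (hc : ν < c) :
    ∃ u y, u ∈ dualCone K ∧ y ∈ Lᗮ ∧ ⟪u, e⟫ = 1 ∧ dualNorm (inducedNorm K e) (u - y) ≤ c := by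
  have h0 : (0 : E) ∈ (L : Set E) ∩ {x | inducedNorm K e x ≤ 1} :=
    ⟨L.zero_mem, (hK.inducedNorm_zero he).trans_le zero_le_one⟩
  obtain ⟨u, hu, hue, hus⟩ := hK.exists_mem_dualCone_forall_inner_lt (interior_subset he)
    ((hK.isCompact_inducedNorm_le_one he hKpointed).inter_left L.closed_of_finiteDimensional)
    (L.convex.inter (hK.convex_inducedNorm_le_one he)) h0
    (fun x ⟨hxL, hx1⟩ hxK => ((hK.le_inducedEig he hKpointed hxK).trans (hν x hxL hx1)).not_gt hc)
  have hc0 : 0 < c := by simpa using hus 0 h0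
  obtain ⟨y, hy, hyc⟩ := hK.exists_mem_orthogonal_dualNorm_sub_le he hKpointed hc0.le
    fun x hx hx1 => (hus x ⟨hx, hx1⟩).le
  exact ⟨u, y, hu, hy, hue, hyc⟩

theorem sInf_nuValues_eq_sSup_eigValues [FiniteDimensional ℝ E] [Nontrivial E]
    (hK : IsClosedConvexCone K) (he : e ∈ interior K)
    (hKpointed : ∀ x ∈ K, -x ∈ K → x = 0) :
    sInf (nuValues K e L) = sSup (eigValues K e L) := by
  have hne : (eigValues K e L).Nonempty :=
    ⟨_, 0, L.zero_mem, (hK.inducedNorm_zero he).trans_le zero_le_one, rfl⟩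
  have hbdd : BddAbove (eigValues K e L) := ⟨1, by
    rintro _ ⟨x, -, hx1, rfl⟩
    exact (hK.inducedEig_le_inducedNorm he hKpointed).trans hx1⟩
  have hstrong (c : ℝ) (hc : sSup (eigValues K e L) < c) : ∃ r ∈ nuValues K e L, r < c := by
    obtain ⟨u, y, hu, hy, hue, hle⟩ := hK.exists_dualNorm_le_of_inducedEig_le he hKpointed
      (c := (sSup (eigValues K e L) + c) / 2) (fun x hx hx1 => le_csSup hbdd ⟨x, hx, hx1, rfl⟩)
      (by linarith)
    exact ⟨_, ⟨u, y, hu, hy, hue, rfl⟩, by linarith⟩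
  refine csInf_eq_of_forall_ge_of_forall_gt_exists_lt ?_ ?_ hstrong
  · obtain ⟨r, hr, -⟩ := hstrong _ (lt_add_one _)
    exact ⟨r, hr⟩
  · rintro _ ⟨u, y, hu, hy, hue, rfl⟩
    exact csSup_le hne fun _ ⟨x, hx, hx1, hr⟩ =>
      hr ▸ hK.inducedEig_le_dualNorm he hKpointed hu hue hy hx hx1

end IsClosedConvexCone

end

/-- The normalization `‖u‖ₑ* = 1` of `u ∈ K*` is expressed as `⟪u, e⟫ = 1`. -/
theorem nu_eq_max_inducedEig {E : Type*} [NormedAddCommGroup E]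
    [InnerProductSpace ℝ E] [FiniteDimensional ℝ E] (K : Set E)
    (hKclosed : IsClosed K) (hKconv : Convex ℝ K)
    (hKcone : ∀ ⦃c : ℝ⦄, 0 ≤ c → ∀ ⦃x⦄, x ∈ K → c • x ∈ K)
    (hKpointed : ∀ x ∈ K, -x ∈ K → x = 0)
    (e : E) (he : e ∈ interior K) (L : Submodule ℝ E) :
    sInf {r | ∃ u y, u ∈ dualCone K ∧ y ∈ Lᗮ ∧ ⟪u, e⟫ = 1 ∧
        r = dualNorm (inducedNorm K e) (u - y)} =
      sSup {r | ∃ x ∈ L, inducedNorm K e x ≤ 1 ∧ r = inducedEig K e x} := by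
  have hK : IsClosedConvexCone K := ⟨hKclosed, hKconv, hKcone⟩
  rcases subsingleton_or_nontrivial E with hE | hE
  · exact sInf_nuValues_eq_sSup_eigValues_of_subsingleton (interior_subset he) L
  · exact hK.sInf_nuValues_eq_sSup_eigValues he hKpointed
end

section
/- For K = ℝ^n_+, e = (1,…,1), and ‖·‖ = ‖·‖_∞, and any linear subspace L ⊆ ℝ^n, ν(L) = max{min_{j=1,…,n} x_j : x ∈ L, ‖x‖_∞ ≤ 1}, where ν(L) = min{‖u−y‖₁ : u ∈ ℝ^n_+, y ∈ L^⊥, ‖u‖₁ = 1}. -/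
/-!
Weak duality is Hölder's inequality: for `x ∈ L` with `‖x‖_∞ ≤ 1`, `u` in the standard simplex
`Δ` and `y ∈ Lᗮ`, `min_j x_j ≤ ⟪u, x⟫ = ⟪u - y, x⟫ ≤ ‖u - y‖₁`.

For the reverse inequality let `m > 0` be the infimum. The open `ℓ¹`-ball of radius `m` is
disjoint from the convex set `Δ - Lᗮ`, so Hahn–Banach gives `x` and `c` with `⟪x, z⟫ < c` on the
ball and `c ≤ ⟪x, z⟫` on `Δ - Lᗮ`. Boundedness below on translates of `Lᗮ` forces `x ∈ Lᗮᗮ = L`;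
testing against the vertices `eᵢ ∈ Δ` and the points `r eᵢ` of the ball gives `c ≤ xᵢ ≤ c / m`.
Hence `(m / c) x` is feasible for the maximum and has all coordinates at least `m`.
-/

open Pointwise

theorem Submodule.mem_orthogonal_of_forall_le_inner_sub {E : Type*} [NormedAddCommGroup E]
    [InnerProductSpace ℝ E] {K : Submodule ℝ E} {x w : E} {c : ℝ}
    (h : ∀ y ∈ K, c ≤ inner ℝ x (w - y)) : x ∈ Kᗮ := by
  rw [Submodule.mem_orthogonal']
  intro y hy
  by_contra hxy
  have := h (((inner ℝ x w - c + 1) / inner ℝ x y) • y) (K.smul_mem _ hy)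
  rw [inner_sub_right, real_inner_smul_right, div_mul_cancel₀ _ hxy] at this
  linarith

variable {ι : Type*}

def dualValues (L : Submodule ℝ (EuclideanSpace ℝ ι)) : Set ℝ :=
  {r | ∃ x ∈ L, (⨆ i, |x i|) ≤ 1 ∧ r = ⨅ j, x j}

theorem zero_mem_dualValues (L : Submodule ℝ (EuclideanSpace ℝ ι)) : (0 : ℝ) ∈ dualValues L :=
  ⟨0, L.zero_mem, by simp, by simp⟩

variable [Fintype ι]

def primalValues (L : Submodule ℝ (EuclideanSpace ℝ ι)) : Set ℝ :=
  {r | ∃ u y : EuclideanSpace ℝ ι, (∀ i, 0 ≤ u i) ∧ y ∈ Lᗮ ∧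
    (∑ i, |u i|) = 1 ∧ r = ∑ i, |u i - y i|}

theorem convexOn_sum_abs : ConvexOn ℝ Set.univ (fun z : EuclideanSpace ℝ ι => ∑ i, |z i|) := by
  let toL1 : EuclideanSpace ℝ ι →ₗ[ℝ] PiLp 1 (fun _ : ι => ℝ) :=
    (WithLp.linearEquiv 1 ℝ (ι → ℝ)).symm.toLinearMap ∘ₗ
      (WithLp.linearEquiv 2 ℝ (ι → ℝ)).toLinearMap
  have h : (fun z : EuclideanSpace ℝ ι => ∑ i, |z i|) = norm ∘ toL1 := by
    ext z
    simp [toL1, PiLp.norm_eq_of_L1]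
  simpa only [h, Set.preimage_univ] using convexOn_univ_norm.comp_linearMap toL1

theorem sum_abs_eq_sum_of_nonneg {u : EuclideanSpace ℝ ι} (hu : ∀ i, 0 ≤ u i) :
    ∑ i, |u i| = ∑ i, u i :=
  Finset.sum_congr rfl fun i _ => abs_of_nonneg (hu i)

theorem sum_abs_single_one [DecidableEq ι] (j : ι) :
    ∑ i, |(EuclideanSpace.single j (1 : ℝ) : EuclideanSpace ℝ ι) i| = 1 := by
  simp [PiLp.single_apply, apply_ite]

theorem one_mem_primalValues [Nonempty ι] (L : Submodule ℝ (EuclideanSpace ℝ ι)) :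
    (1 : ℝ) ∈ primalValues L := by
  classical
  obtain ⟨j⟩ := ‹Nonempty ι›
  refine ⟨EuclideanSpace.single j 1, 0, fun i => ?_, Lᗮ.zero_mem, sum_abs_single_one j, ?_⟩
  · rw [PiLp.single_apply]
    split_ifs <;> norm_num
  · simpa using (sum_abs_single_one j).symm

theorem primalValues_bddBelow (L : Submodule ℝ (EuclideanSpace ℝ ι)) :
    BddBelow (primalValues L) :=
  ⟨0, by rintro r ⟨u, y, -, -, -, rfl⟩; positivity⟩

theorem dualValues_bddAbove [Nonempty ι] (L : Submodule ℝ (EuclideanSpace ℝ ι)) :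
    BddAbove (dualValues L) := by
  refine ⟨1, ?_⟩
  rintro r ⟨x, -, hx, rfl⟩
  obtain ⟨i⟩ := ‹Nonempty ι›
  calc ⨅ j, x j ≤ x i := ciInf_le (Set.finite_range _).bddBelow i
    _ ≤ |x i| := le_abs_self _
    _ ≤ ⨆ j, |x j| := le_ciSup (f := fun j => |x j|) (Set.finite_range _).bddAbove i
    _ ≤ 1 := hx

theorem le_of_mem_dualValues_of_mem_primalValues {L : Submodule ℝ (EuclideanSpace ℝ ι)}
    {b a : ℝ} (hb : b ∈ dualValues L) (ha : a ∈ primalValues L) : b ≤ a := by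
  obtain ⟨x, hxL, hx, rfl⟩ := hb
  obtain ⟨u, y, hu, hy, hu1, rfl⟩ := ha
  have hx1 : ∀ i, |x i| ≤ 1 := fun i =>
    (le_ciSup (f := fun i => |x i|) (Set.finite_range _).bddAbove i).trans hx
  have hyx : ∑ i, y i * x i = 0 := by
    simpa [PiLp.inner_apply, mul_comm] using Submodule.inner_left_of_mem_orthogonal hxL hy
  rw [sum_abs_eq_sum_of_nonneg hu] at hu1
  calc ⨅ j, x j = ∑ i, u i * ⨅ j, x j := by rw [← Finset.sum_mul, hu1, one_mul]
    _ ≤ ∑ i, u i * x i := Finset.sum_le_sum fun i _ =>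
        mul_le_mul_of_nonneg_left (ciInf_le (Set.finite_range _).bddBelow i) (hu i)
    _ = ∑ i, (u i - y i) * x i := by simp only [sub_mul, Finset.sum_sub_distrib, hyx, sub_zero]
    _ ≤ ∑ i, |u i - y i| := Finset.sum_le_sum fun i _ => by
        calc (u i - y i) * x i ≤ |u i - y i| * |x i| := (le_abs_self _).trans (abs_mul _ _).le
          _ ≤ |u i - y i| := mul_le_of_le_one_right (abs_nonneg _) (hx1 i)

theorem exists_separating_vector {L : Submodule ℝ (EuclideanSpace ℝ ι)} {m : ℝ}
    (hm : m ∈ lowerBounds (primalValues L)) :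
    ∃ (x : EuclideanSpace ℝ ι) (c : ℝ),
      (∀ z : EuclideanSpace ℝ ι, ∑ i, |z i| < m → inner ℝ x z < c) ∧
      ∀ u ∈ WithLp.ofLp ⁻¹' stdSimplex ℝ ι, ∀ y ∈ Lᗮ, c ≤ inner ℝ x (u - y) := by
  have hS : Convex ℝ {z : EuclideanSpace ℝ ι | ∑ i, |z i| < m} := by
    simpa only [Set.sep_univ] using convexOn_sum_abs.convex_lt m
  have hT : Convex ℝ (WithLp.ofLp ⁻¹' stdSimplex ℝ ι - (Lᗮ : Set (EuclideanSpace ℝ ι))) :=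
    ((convex_stdSimplex ℝ ι).linear_preimage (WithLp.linearEquiv 2 ℝ (ι → ℝ)).toLinearMap).sub
      Lᗮ.convex
  have hST : Disjoint {z : EuclideanSpace ℝ ι | ∑ i, |z i| < m}
      (WithLp.ofLp ⁻¹' stdSimplex ℝ ι - (Lᗮ : Set (EuclideanSpace ℝ ι))) := by
    rw [Set.disjoint_left]
    rintro _ hz ⟨u, ⟨hu, hu1⟩, y, hy, rfl⟩
    have := hm ⟨u, y, hu, hy, (sum_abs_eq_sum_of_nonneg hu).trans hu1, rfl⟩
    simp only [Set.mem_ofPred_eq, PiLp.sub_apply] at hz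
    linarith
  obtain ⟨f, c, hfS, hfT⟩ :=
    geometric_hahn_banach_open hS (isOpen_lt (by fun_prop) continuous_const) hT hST
  refine ⟨(InnerProductSpace.toDual ℝ _).symm f, c, fun z hz => ?_, fun u hu y hy => ?_⟩
  · rw [InnerProductSpace.toDual_symm_apply]
    exact hfS z hz
  · rw [InnerProductSpace.toDual_symm_apply]
    exact hfT _ ⟨u, hu, y, hy, rfl⟩

theorem exists_mem_dualValues_ge [Nonempty ι] {L : Submodule ℝ (EuclideanSpace ℝ ι)} {m : ℝ}
    (hm0 : 0 < m) (hm : m ∈ lowerBounds (primalValues L)) :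
    ∃ b ∈ dualValues L, m ≤ b := by
  classical
  obtain ⟨x, c, hball, hsimplex⟩ := exists_separating_vector hm
  have hc : 0 < c := by simpa using hball 0 (by simpa using hm0)
  have hvertex (j : ι) : EuclideanSpace.single j (1 : ℝ) ∈ WithLp.ofLp ⁻¹' stdSimplex ℝ ι := by
    simpa using single_mem_stdSimplex ℝ j
  have hxL : x ∈ L := by
    rw [← L.orthogonal_orthogonal]
    obtain ⟨j⟩ := ‹Nonempty ι›
    exact Submodule.mem_orthogonal_of_forall_le_inner_sub (hsimplex _ (hvertex j))
  have hcx (j : ι) : c ≤ x j := by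
    simpa [EuclideanSpace.inner_single_right] using hsimplex _ (hvertex j) 0 Lᗮ.zero_mem
  have hxc (j : ι) : m * x j ≤ c := by
    have hxj : 0 < x j := hc.trans_le (hcx j)
    by_contra! hlt
    have hr : ∑ i, |((c / x j) • EuclideanSpace.single j (1 : ℝ)) i| < m := by
      simpa [PiLp.single_apply, apply_ite, abs_of_pos (div_pos hc hxj),
        div_lt_iff₀ hxj] using hlt
    have := hball _ hr
    simp [inner_smul_right, EuclideanSpace.inner_single_right, div_mul_cancel₀ _ hxj.ne'] at this
  refine ⟨⨅ j, (m / c) * x j, ⟨(m / c) • x, L.smul_mem _ hxL, ciSup_le fun j => ?_, rfl⟩,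
    le_ciInf fun j => ?_⟩
  · rw [PiLp.smul_apply, smul_eq_mul, abs_of_pos (mul_pos (div_pos hm0 hc) (hc.trans_le (hcx j))),
      div_mul_eq_mul_div, div_le_one hc]
    exact hxc j
  · rw [div_mul_eq_mul_div, le_div_iff₀ hc]
    exact mul_le_mul_of_nonneg_left (hcx j) hm0.le

/-- For `K = ℝⁿ₊`, `e = (1,…,1)` and `‖·‖ = ‖·‖_∞` (with dual norm `‖·‖₁`):
`ν(L) = max {min_j x_j : x ∈ L, ‖x‖_∞ ≤ 1}`. -/
theorem nu_orthant_eq_max_min {n : ℕ} (hn : 0 < n)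
    (L : Submodule ℝ (EuclideanSpace ℝ (Fin n))) :
    sInf {r | ∃ u y : EuclideanSpace ℝ (Fin n), (∀ i, 0 ≤ u i) ∧ y ∈ Lᗮ ∧
        (∑ i, |u i|) = 1 ∧ r = ∑ i, |u i - y i|} =
      sSup {r | ∃ x ∈ L, (⨆ i, |x i|) ≤ 1 ∧ r = ⨅ j, x j} := by
  have : Nonempty (Fin n) := ⟨⟨0, hn⟩⟩
  change sInf (primalValues L) = sSup (dualValues L)
  refine le_antisymm ?_ (le_csInf ⟨1, one_mem_primalValues L⟩ fun a ha =>
    csSup_le ⟨0, zero_mem_dualValues L⟩ fun b hb => le_of_mem_dualValues_of_mem_primalValues hb ha)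
  rcases le_or_gt (sInf (primalValues L)) 0 with hm0 | hm0
  · exact hm0.trans (le_csSup (dualValues_bddAbove L) (zero_mem_dualValues L))
  · obtain ⟨b, hb, hmb⟩ :=
      exists_mem_dualValues_ge hm0 fun a ha => csInf_le (primalValues_bddBelow L) ha
    exact hmb.trans (le_csSup (dualValues_bddAbove L) hb)
end
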